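/- arXiv:1701.07645 — 4 statements merged into one kernel-verified Lean document; each statement's English description precedes it below -/
import Mathlib

section
/- Let n ≥ 1 and let f : {0,1}^n → ℝ ∪ {+∞} be the quadratic function f(x) = Σ_{i∈[n]} h_i x_i + Σ_{1≤i<j≤n} h_{ij} x_i x_j, where h_i ∈ ℝ is finite for every i ∈ [n] and h_{ij} ∈ ℝ ∪ {+∞} with h_{ij} = h_{ji} for distinct i, j ∈ [n]. Then f is M♮-convex if and only if both of the following hold: (1) h_{ij} ≥ min{h_{ik}, h_{jk}} for all distinct i, j, k ∈ [n] (the anti-ultrametric property), and (2) h_{ij} ≥ 0 for all distinct i, j ∈ [n]. -/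
/-!
For a threshold `c`, the anti-ultrametric inequality makes "`x = y` or `c ≤ h_{xy}`" an
equivalence relation, so the sets `{j : c ≤ h_{ij}}` form a tree of clusters. Since the `h_{ij}`
are nonnegative, one sum of them is dominated by another as soon as, for every `c > 0`, it has
at most as many terms `≥ c`; this avoids any cancellation of `+∞`.

Moving `i ∈ X \ Y` from `X` to `Y` changes `f(X) + f(Y)` by
`Σ_{y ∈ Y} h_{iy} - Σ_{a ∈ X-i} h_{ia}`. If this is positive, some threshold has more elements
of `Y` than of `X - i` in the cluster of `i`; take the largest such threshold `t`. Descending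
the cluster tree inside the `t`-cluster of `i`, always into a child with a surplus of `Y`, ends
at some `j ∈ Y \ X` all of whose clusters above level `t` carry a surplus of `Y`, and this is
exactly what the threshold comparison needs for the exchange of `i` and `j`.

Conversely, the exchange axiom for `{i, j}, {k}` and for `{i, j}, ∅` gives the two conditions.
-/

open Finset

/-- A function on `{0,1}^n` (identified with finite subsets of the index set) with values in
`ℝ ∪ {+∞}` is M♮-convex if for all `X, Y` and all `i ∈ supp⁺(X - Y) = X \ Y` there exists
`j ∈ supp⁺(Y - X) ∪ {0} = (Y \ X) ∪ {0}` (where `j = 0` means the zero vector) such that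
`f(X) + f(Y) ≥ f(X - χ_i + χ_j) + f(Y + χ_i - χ_j)`. -/
def MnatConvex {ι : Type*} [DecidableEq ι] (f : Finset ι → WithTop ℝ) : Prop :=
  ∀ X Y : Finset ι, ∀ i ∈ X \ Y,
    (f (X.erase i) + f (insert i Y) ≤ f X + f Y) ∨
    (∃ j ∈ Y \ X, f (insert j (X.erase i)) + f ((insert i Y).erase j) ≤ f X + f Y)

/-- The quadratic function `x ↦ Σ_{i ∈ [n]} h_i x_i + Σ_{1 ≤ i < j ≤ n} h_{ij} x_i x_j`
on `{0,1}^n`, a subset `S ⊆ [n]` encoding its indicator vector. -/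
def quadF {n : ℕ} (h : Fin n → ℝ) (H : Fin n → Fin n → WithTop ℝ)
    (S : Finset (Fin n)) : WithTop ℝ :=
  (∑ i ∈ S, (h i : WithTop ℝ)) + ∑ p ∈ (S ×ˢ S).filter (fun p => p.1 < p.2), H p.1 p.2

theorem Finset.card_filter_map_val {ι α : Type*} (F : Finset ι) (u : ι → α) (p : α → Prop)
    [DecidablePred p] : Multiset.card ((F.val.map u).filter p) = #(F.filter (p ∘ u)) := by
  rw [Multiset.filter_map, Multiset.card_map]; rfl

section Majorization

variable {α : Type*} [AddCommMonoid α] [LinearOrder α] [IsOrderedAddMonoid α]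

theorem Multiset.sum_le_sum_of_card_filter_le {M N : Multiset α} (hN : ∀ b ∈ N, 0 ≤ b)
    (h : ∀ c, 0 < c → Multiset.card (M.filter (c ≤ ·)) ≤ Multiset.card (N.filter (c ≤ ·))) :
    M.sum ≤ N.sum := by
  classical
  induction M using Multiset.strongInductionOn generalizing N with
  | _ M ih =>
  rcases eq_or_ne M 0 with rfl | hM
  · simpa using Multiset.sum_nonneg hN
  obtain ⟨a, haM, hmax⟩ := Multiset.exists_max_image id hM
  simp only [id] at hmax
  rcases le_or_gt a 0 with ha | ha
  · calc M.sum ≤ Multiset.card M • (0 : α) :=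
          Multiset.sum_le_card_nsmul _ _ fun x hx => (hmax x hx).trans ha
      _ = 0 := smul_zero _
      _ ≤ N.sum := Multiset.sum_nonneg hN
  obtain ⟨b, hbN, hab⟩ : ∃ b ∈ N, a ≤ b := by
    have ha' : 0 < Multiset.card (M.filter (a ≤ ·)) :=
      Multiset.card_pos_iff_exists_mem.2 ⟨a, Multiset.mem_filter.2 ⟨haM, le_rfl⟩⟩
    obtain ⟨b, hb⟩ := Multiset.card_pos_iff_exists_mem.1 (ha'.trans_le (h a ha))
    exact ⟨b, Multiset.mem_filter.1 hb⟩
  rw [← Multiset.cons_erase haM, ← Multiset.cons_erase hbN, Multiset.sum_cons, Multiset.sum_cons]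
  refine add_le_add hab (ih _ (Multiset.erase_lt.2 haM)
    (fun x hx => hN x (Multiset.mem_of_mem_erase hx)) fun c hc => ?_)
  have hcount := h c hc
  rw [← Multiset.cons_erase haM, ← Multiset.cons_erase hbN] at hcount
  rcases le_or_gt c a with hca | hac
  · simpa [Multiset.filter_cons_of_pos, hca, hca.trans hab] using hcount
  · rw [Multiset.filter_eq_nil.2 fun x hx =>
      not_le.2 ((hmax x (Multiset.mem_of_mem_erase hx)).trans_lt hac)]
    exact Nat.zero_le _

theorem Finset.sum_le_sum_of_card_filter_le {ι : Type*} {F G : Finset ι} {u v : ι → α}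
    (hv : ∀ x ∈ G, 0 ≤ v x) (h : ∀ c, 0 < c → #(F.filter (c ≤ u ·)) ≤ #(G.filter (c ≤ v ·))) :
    ∑ x ∈ F, u x ≤ ∑ x ∈ G, v x :=
  Multiset.sum_le_sum_of_card_filter_le (by simpa using hv) fun c hc => by
    rw [card_filter_map_val, card_filter_map_val]; exact h c hc

theorem Finset.sum_add_sum_le_of_card_filter_le {ι : Type*} {F₁ F₂ G₁ G₂ : Finset ι}
    {u₁ u₂ v₁ v₂ : ι → α} (hv₁ : ∀ x ∈ G₁, 0 ≤ v₁ x) (hv₂ : ∀ x ∈ G₂, 0 ≤ v₂ x)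
    (h : ∀ c, 0 < c → #(F₁.filter (c ≤ u₁ ·)) + #(F₂.filter (c ≤ u₂ ·)) ≤
      #(G₁.filter (c ≤ v₁ ·)) + #(G₂.filter (c ≤ v₂ ·))) :
    ∑ x ∈ F₁, u₁ x + ∑ x ∈ F₂, u₂ x ≤ ∑ x ∈ G₁, v₁ x + ∑ x ∈ G₂, v₂ x := by
  simp only [sum_eq_multiset_sum, ← Multiset.sum_add]
  refine Multiset.sum_le_sum_of_card_filter_le ?_ fun c hc => ?_
  · simp only [Multiset.mem_add, Multiset.mem_map]
    rintro _ (⟨x, hx, rfl⟩ | ⟨x, hx, rfl⟩)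
    exacts [hv₁ x hx, hv₂ x hx]
  · simp only [Multiset.filter_add, Multiset.card_add, card_filter_map_val]
    exact h c hc

end Majorization

theorem Finset.exists_card_filter_lt_of_le {ι α : Type*} [LinearOrder α] {A Y : Finset ι}
    {g : ι → α} {c : α} (hc : #(A.filter (c ≤ g ·)) < #(Y.filter (c ≤ g ·))) :
    ∃ y ∈ Y, c ≤ g y ∧ #(A.filter (g y ≤ g ·)) < #(Y.filter (g y ≤ g ·)) := by
  obtain ⟨y, hy, hmin⟩ := (Y.filter (c ≤ g ·)).exists_min_image g (card_pos.1 (by omega))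
  obtain ⟨hyY, hcy⟩ := mem_filter.1 hy
  refine ⟨y, hyY, hcy, ?_⟩
  have hY : Y.filter (g y ≤ g ·) = Y.filter (c ≤ g ·) :=
    filter_congr fun x hx => ⟨hcy.trans, fun hcx => hmin x (mem_filter.2 ⟨hx, hcx⟩)⟩
  rw [hY]
  exact (card_le_card (monotone_filter_right A fun _ _ => hcy.trans)).trans_lt hc

theorem Finset.exists_max_card_filter_lt {ι α : Type*} [LinearOrder α] {A Y : Finset ι}
    {g : ι → α} {c : α} (hc : #(A.filter (c ≤ g ·)) < #(Y.filter (c ≤ g ·))) :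
    ∃ t, #(A.filter (t ≤ g ·)) < #(Y.filter (t ≤ g ·)) ∧
      ∀ c, t < c → #(Y.filter (c ≤ g ·)) ≤ #(A.filter (c ≤ g ·)) := by
  obtain ⟨y, hyY, -, hy⟩ := exists_card_filter_lt_of_le hc
  obtain ⟨z, hz, hmax⟩ :=
    (Y.filter fun y => #(A.filter (g y ≤ g ·)) < #(Y.filter (g y ≤ g ·))).exists_max_image g
      ⟨y, mem_filter.2 ⟨hyY, hy⟩⟩
  refine ⟨g z, (mem_filter.1 hz).2, fun c hzc => not_lt.1 fun hc => ?_⟩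
  obtain ⟨x, hxY, hcx, hx⟩ := exists_card_filter_lt_of_le hc
  exact (hzc.trans_le hcx).not_ge (hmax x (mem_filter.2 ⟨hxY, hx⟩))

theorem card_filter_lt_of_card_filter_filter_lt {ι α : Type*} [DecidableEq ι] [LinearOrder α]
    {s : ι → ι → α} {P Q : Finset ι} {q : ι → Prop} [DecidablePred q] {j : ι} {μ : α}
    (hqj : q j) (hq : ∀ x, μ < s j x → q x) (hμ : ∀ x ∈ P ∪ Q, x ≠ j → μ ≤ s j x)
    (hPQ : #P < #Q)
    (h : ∀ c, μ < c → #((P.filter q).filter fun x => x = j ∨ c ≤ s j x) <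
      #((Q.filter q).filter fun x => x = j ∨ c ≤ s j x))
    (c : α) : #(P.filter fun x => x = j ∨ c ≤ s j x) < #(Q.filter fun x => x = j ∨ c ≤ s j x) := by
  rcases le_or_gt c μ with hc | hc
  · have hall (F : Finset ι) (hF : F ⊆ P ∪ Q) : F.filter (fun x => x = j ∨ c ≤ s j x) = F :=
      filter_true_of_mem fun x hx => or_iff_not_imp_left.2 fun hxj => hc.trans (hμ x (hF hx) hxj)
    rwa [hall P subset_union_left, hall Q subset_union_right]
  · have hrestrict (F : Finset ι) : F.filter (fun x => x = j ∨ c ≤ s j x) =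
        (F.filter q).filter (fun x => x = j ∨ c ≤ s j x) := by
      rw [filter_filter]
      refine filter_congr fun x _ => ⟨fun hx => ⟨?_, hx⟩, And.right⟩
      rcases hx with rfl | hx
      exacts [hqj, hq x (hc.trans_le hx)]
    rw [hrestrict P, hrestrict Q]
    exact h c hc

def IsAntiUltrametric {ι α : Type*} [LinearOrder α] (s : ι → ι → α) : Prop :=
  ∀ x y z, x ≠ y → y ≠ z → x ≠ z → min (s x z) (s y z) ≤ s x y

namespace IsAntiUltrametric

variable {ι α : Type*} [LinearOrder α] {s : ι → ι → α}

theorem eq_or_le_trans (hs : IsAntiUltrametric s) (hsymm : ∀ x y, s x y = s y x) {c : α}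
    {x y z : ι} (hxy : x = y ∨ c ≤ s x y) (hyz : y = z ∨ c ≤ s y z) : x = z ∨ c ≤ s x z := by
  rcases hxy with rfl | hxy
  · exact hyz
  rcases hyz with rfl | hyz
  · exact .inr hxy
  by_cases hxz : x = z
  · exact .inl hxz
  rcases eq_or_ne x y with rfl | hxy'
  · exact .inr hyz
  rcases eq_or_ne y z with rfl | hyz'
  · exact .inr hxy
  rw [hsymm y z] at hyz
  exact .inr ((le_min hxy hyz).trans (hs x z y hxz hyz'.symm hxy'))

theorem eq_or_lt_trans (hs : IsAntiUltrametric s) (hsymm : ∀ x y, s x y = s y x) {c : α}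
    {x y z : ι} (hxy : x = y ∨ c < s x y) (hyz : y = z ∨ c < s y z) : x = z ∨ c < s x z := by
  rcases hxy with rfl | hxy
  · exact hyz
  rcases hyz with rfl | hyz
  · exact .inr hxy
  by_cases hxz : x = z
  · exact .inl hxz
  rcases eq_or_ne x y with rfl | hxy'
  · exact .inr hyz
  rcases eq_or_ne y z with rfl | hyz'
  · exact .inr hxy
  rw [hsymm y z] at hyz
  exact .inr ((lt_min hxy hyz).trans_le (hs x z y hxz hyz'.symm hxy'))

theorem filter_le_eq [DecidableEq ι] (hs : IsAntiUltrametric s) (hsymm : ∀ x y, s x y = s y x)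
    {F : Finset ι} {i j : ι} {c : α} (hi : i ∉ F) (hj : j ∉ F) (hc : c ≤ s i j) :
    F.filter (c ≤ s j ·) = F.filter (c ≤ s i ·) := by
  refine filter_congr fun x hx => ?_
  have hxi : i ≠ x := fun h => hi (h ▸ hx)
  have hxj : j ≠ x := fun h => hj (h ▸ hx)
  exact ⟨fun h => (hs.eq_or_le_trans hsymm (.inr hc) (.inr h)).resolve_left hxi,
    fun h => (hs.eq_or_le_trans hsymm (.inr (hsymm i j ▸ hc)) (.inr h)).resolve_left hxj⟩

theorem exists_forall_card_filter_lt [DecidableEq ι] (hs : IsAntiUltrametric s)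
    (hsymm : ∀ x y, s x y = s y x) {P Q : Finset ι} (hPQ : #P < #Q) :
    ∃ j ∈ Q, j ∉ P ∧ ∀ c, #(P.filter fun x => x = j ∨ c ≤ s j x) <
      #(Q.filter fun x => x = j ∨ c ≤ s j x) := by
  induction hn : #(P ∪ Q) using Nat.strong_induction_on generalizing P Q with
  | _ n ih =>
  by_cases hpair : ∃ u ∈ P ∪ Q, ∃ v ∈ P ∪ Q, u ≠ v
  swap
  · push Not at hpair
    have hQ : #Q ≤ 1 := card_le_one.2 fun x hx y hy =>
      hpair x (mem_union_right _ hx) y (mem_union_right _ hy)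
    have hP : P = ∅ := card_eq_zero.1 (by omega)
    obtain ⟨j, hj⟩ := card_pos.1 (by omega : 0 < #Q)
    refine ⟨j, hj, by simp [hP], fun c => ?_⟩
    rw [hP, filter_empty, card_empty]
    exact card_pos.2 ⟨j, mem_filter.2 ⟨hj, .inl rfl⟩⟩
  obtain ⟨u, hu, v, hv, huv⟩ := hpair
  obtain ⟨⟨u, v⟩, huv, hmin⟩ := (P ∪ Q).offDiag.exists_min_image (fun p => s p.1 p.2)
    ⟨(u, v), mem_offDiag.2 ⟨hu, hv, huv⟩⟩
  obtain ⟨hu, hv, huv⟩ := mem_offDiag.1 huv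
  -- `s u v` is the least value of `s` on `P ∪ Q`; split along the strict `s u v`-ball of `u`,
  -- which separates `u` from `v` and, by the anti-ultrametric property, is a union of such balls.
  have hsplit (q : ι → Prop) [DecidablePred q] (hq : ∀ x y, s u v < s x y → (q x ↔ q y))
      (w : ι) (hw : w ∈ P ∪ Q) (hqw : ¬ q w) (hlt : #(P.filter q) < #(Q.filter q)) :
      ∃ j ∈ Q, j ∉ P ∧ ∀ c, #(P.filter fun x => x = j ∨ c ≤ s j x) <
        #(Q.filter fun x => x = j ∨ c ≤ s j x) := by
    have hcard : #(P.filter q ∪ Q.filter q) < n := by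
      rw [← filter_union, ← hn]
      exact card_lt_card (filter_ssubset.2 ⟨w, hw, hqw⟩)
    obtain ⟨j, hjQ, hjP, hj⟩ := ih _ hcard hlt rfl
    obtain ⟨hjQ, hqj⟩ := mem_filter.1 hjQ
    refine ⟨j, hjQ, fun h => hjP (mem_filter.2 ⟨h, hqj⟩),
      card_filter_lt_of_card_filter_filter_lt hqj (fun x hx => (hq j x hx).1 hqj) ?_ hPQ
        fun c _ => hj c⟩
    exact fun x hx hxj => hmin (j, x) (mem_offDiag.2 ⟨mem_union_right _ hjQ, hx, Ne.symm hxj⟩)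
  have hp (x y : ι) (hxy : s u v < s x y) : (u = x ∨ s u v < s u x) ↔ (u = y ∨ s u v < s u y) :=
    ⟨fun h => hs.eq_or_lt_trans hsymm h (.inr hxy),
      fun h => hs.eq_or_lt_trans hsymm h (.inr (hsymm x y ▸ hxy))⟩
  rcases lt_or_ge #(P.filter fun x => u = x ∨ s u v < s u x)
      #(Q.filter fun x => u = x ∨ s u v < s u x) with hlt | hge
  · exact hsplit _ hp v hv (by simp [huv]) hlt
  · refine hsplit _ (fun x y hxy => not_congr (hp x y hxy)) u hu (by simp) ?_
    have := card_filter_add_card_filter_not (s := P) fun x => u = x ∨ s u v < s u x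
    have := card_filter_add_card_filter_not (s := Q) fun x => u = x ∨ s u v < s u x
    omega

theorem exists_exchange [AddCommMonoid α] [IsOrderedAddMonoid α] [DecidableEq ι]
    (hs : IsAntiUltrametric s) (hsymm : ∀ x y, s x y = s y x)
    (hnn : ∀ x y, x ≠ y → 0 ≤ s x y) {A Y : Finset ι} {i : ι} (hiA : i ∉ A) (hiY : i ∉ Y)
    (hlt : ¬ ∑ y ∈ Y, s i y ≤ ∑ a ∈ A, s i a) :
    ∃ j ∈ Y, j ∉ A ∧
      ∑ a ∈ A, s j a + ∑ y ∈ Y.erase j, s i y ≤ ∑ a ∈ A, s i a + ∑ y ∈ Y.erase j, s j y := by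
  have hne {x : ι} {F : Finset ι} (hi : i ∉ F) (hx : x ∈ F) : i ≠ x := fun h => hi (h ▸ hx)
  obtain ⟨c, -, hc⟩ : ∃ c, 0 < c ∧ #(A.filter (c ≤ s i ·)) < #(Y.filter (c ≤ s i ·)) := by
    by_contra! h
    exact hlt (sum_le_sum_of_card_filter_le (fun a ha => hnn i a (hne hiA ha)) h)
  obtain ⟨t, ht, htmax⟩ := exists_max_card_filter_lt hc
  obtain ⟨j, hjQ, hjP, hj⟩ := hs.exists_forall_card_filter_lt hsymm ht
  obtain ⟨hjY, htj⟩ := mem_filter.1 hjQ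
  have hjA : j ∉ A := fun h => hjP (mem_filter.2 ⟨h, htj⟩)
  refine ⟨j, hjY, hjA, sum_add_sum_le_of_card_filter_le (fun a ha => hnn i a (hne hiA ha))
    (fun y hy => hnn j y (Ne.symm (ne_of_mem_erase hy))) fun c _ => ?_⟩
  rcases le_or_gt c (s i j) with hcij | hcij
  · rw [hs.filter_le_eq hsymm hiA hjA hcij,
      hs.filter_le_eq hsymm (fun h => hiY (mem_of_mem_erase h)) (notMem_erase j Y) hcij]
  · have hY : #((Y.erase j).filter (c ≤ s i ·)) ≤ #(A.filter (c ≤ s i ·)) :=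
      (card_le_card (filter_subset_filter _ (erase_subset j Y))).trans
        (htmax c (htj.trans_lt hcij))
    have hA : A.filter (c ≤ s j ·) ⊆ (A.filter (t ≤ s i ·)).filter fun x => x = j ∨ c ≤ s j x := by
      intro x hx
      obtain ⟨hxA, hcx⟩ := mem_filter.1 hx
      have htx := (hs.eq_or_le_trans hsymm (.inr htj)
        (.inr ((htj.trans hcij.le).trans hcx))).resolve_left (hne hiA hxA)
      exact mem_filter.2 ⟨mem_filter.2 ⟨hxA, htx⟩, .inr hcx⟩
    have hQ : (Y.filter (t ≤ s i ·)).filter (fun x => x = j ∨ c ≤ s j x) ⊆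
        insert j ((Y.erase j).filter (c ≤ s j ·)) := by
      intro x hx
      simp only [mem_filter] at hx
      simp only [mem_insert, mem_filter, mem_erase]
      tauto
    have := (card_le_card hA).trans_lt
      ((hj c).trans_le ((card_le_card hQ).trans (card_insert_le _ _)))
    omega

end IsAntiUltrametric

theorem WithTop.le_of_le_of_eq_coe_add {a b x y : WithTop ℝ} (r : ℝ) (h : a ≤ b)
    (ha : a = r + x) (hb : b = r + y) : x ≤ y := by
  rw [ha, hb] at h
  exact (WithTop.add_le_add_iff_left WithTop.coe_ne_top).1 h

theorem quadF_insert {n : ℕ} (h : Fin n → ℝ) {H : Fin n → Fin n → WithTop ℝ}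
    (hsymm : ∀ i j, H i j = H j i) {S : Finset (Fin n)} {i : Fin n} (hi : i ∉ S) :
    quadF h H (insert i S) = quadF h H S + h i + ∑ a ∈ S, H i a := by
  have hcross : ∑ a ∈ S, H i a =
      (∑ y ∈ S, if i < y then H i y else 0) + ∑ x ∈ S, if x < i then H x i else 0 := by
    rw [← sum_add_distrib]
    refine sum_congr rfl fun a ha => ?_
    rcases lt_or_gt_of_ne (ne_of_mem_of_not_mem ha hi) with hai | hia
    · simp [hai, hai.not_gt, hsymm a i]
    · simp [hia, hia.not_gt]
  simp only [quadF, sum_filter, sum_product, sum_insert hi, lt_irrefl, if_false, sum_add_distrib,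
    hcross]
  abel

section quadF

variable {n : ℕ} (h : Fin n → ℝ) {H : Fin n → Fin n → WithTop ℝ}

theorem quadF_erase_add_quadF_insert_le (hsymm : ∀ i j, H i j = H j i) {X Y : Finset (Fin n)}
    {i : Fin n} (hiX : i ∈ X) (hiY : i ∉ Y) (hle : ∑ y ∈ Y, H i y ≤ ∑ a ∈ X.erase i, H i a) :
    quadF h H (X.erase i) + quadF h H (insert i Y) ≤ quadF h H X + quadF h H Y := by
  conv_rhs => rw [← insert_erase hiX]
  rw [quadF_insert h hsymm hiY, quadF_insert h hsymm (notMem_erase i X)]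
  calc _ = quadF h H (X.erase i) + quadF h H Y + h i + ∑ y ∈ Y, H i y := by abel
    _ ≤ quadF h H (X.erase i) + quadF h H Y + h i + ∑ a ∈ X.erase i, H i a := by gcongr
    _ = _ := by abel

theorem quadF_exchange_le (hsymm : ∀ i j, H i j = H j i) {X Y : Finset (Fin n)} {i j : Fin n}
    (hiX : i ∈ X) (hiY : i ∉ Y) (hjX : j ∉ X) (hjY : j ∈ Y)
    (hle : ∑ a ∈ X.erase i, H j a + ∑ y ∈ Y.erase j, H i y ≤
      ∑ a ∈ X.erase i, H i a + ∑ y ∈ Y.erase j, H j y) :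
    quadF h H (insert j (X.erase i)) + quadF h H ((insert i Y).erase j) ≤
      quadF h H X + quadF h H Y := by
  have hij : i ≠ j := ne_of_mem_of_not_mem hiX hjX
  conv_rhs => rw [← insert_erase hiX, ← insert_erase hjY]
  rw [erase_insert_of_ne hij, quadF_insert h hsymm (notMem_erase i X),
    quadF_insert h hsymm (notMem_erase j Y),
    quadF_insert h hsymm fun hj => hjX (mem_of_mem_erase hj),
    quadF_insert h hsymm fun hi => hiY (mem_of_mem_erase hi)]
  calc _ = quadF h H (X.erase i) + quadF h H (Y.erase j) + h i + h j +
        (∑ a ∈ X.erase i, H j a + ∑ y ∈ Y.erase j, H i y) := by abel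
    _ ≤ quadF h H (X.erase i) + quadF h H (Y.erase j) + h i + h j +
        (∑ a ∈ X.erase i, H i a + ∑ y ∈ Y.erase j, H j y) := by gcongr
    _ = _ := by abel

theorem quadF_singleton (a : Fin n) : quadF h H {a} = h a := by
  simp [quadF, filter_singleton]

theorem quadF_pair (hsymm : ∀ i j, H i j = H j i) {a b : Fin n} (hab : a ≠ b) :
    quadF h H {a, b} = h b + h a + H a b := by
  rw [quadF_insert h hsymm (notMem_singleton.2 hab), quadF_singleton, sum_singleton]

theorem nonneg_of_mnatConvex_quadF (hsymm : ∀ i j, H i j = H j i)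
    (hM : MnatConvex (quadF h H)) {i j : Fin n} (hij : i ≠ j) : 0 ≤ H i j := by
  rcases hM {i, j} ∅ i (by simp) with hle | ⟨_, hk, _⟩
  · rw [erase_insert (notMem_singleton.2 hij), insert_empty, quadF_singleton, quadF_singleton,
      quadF_pair h hsymm hij, show quadF h H ∅ = 0 by simp [quadF]] at hle
    exact WithTop.le_of_le_of_eq_coe_add (h i + h j) hle (by push_cast; abel) (by push_cast; abel)
  · simp at hk

theorem isAntiUltrametric_of_mnatConvex_quadF (hsymm : ∀ i j, H i j = H j i)
    (hM : MnatConvex (quadF h H)) : IsAntiUltrametric H := by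
  intro i j k hij hjk hik
  rcases hM {i, j} {k} i (by simp [hik]) with hle | ⟨k', hk', hle⟩
  · rw [erase_insert (notMem_singleton.2 hij), quadF_singleton, quadF_singleton,
      quadF_pair h hsymm hij, quadF_pair h hsymm hik] at hle
    refine min_le_of_left_le (WithTop.le_of_le_of_eq_coe_add (h i + h j + h k) hle ?_ ?_) <;>
      (push_cast; abel)
  · obtain rfl : k' = k := by simpa using (mem_sdiff.1 hk').1
    rw [erase_insert (notMem_singleton.2 hij), erase_insert_of_ne hik, erase_singleton,
      insert_empty, quadF_singleton, quadF_singleton,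
      quadF_pair h hsymm hjk.symm, quadF_pair h hsymm hij, hsymm k' j] at hle
    refine min_le_of_right_le (WithTop.le_of_le_of_eq_coe_add (h i + h j + h k') hle ?_ ?_) <;>
      (push_cast; abel)

theorem mnatConvex_quadF (hsymm : ∀ i j, H i j = H j i) (hs : IsAntiUltrametric H)
    (hnn : ∀ i j, i ≠ j → 0 ≤ H i j) : MnatConvex (quadF h H) := by
  intro X Y i hi
  obtain ⟨hiX, hiY⟩ := mem_sdiff.1 hi
  by_cases hle : ∑ y ∈ Y, H i y ≤ ∑ a ∈ X.erase i, H i a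
  · exact .inl (quadF_erase_add_quadF_insert_le h hsymm hiX hiY hle)
  obtain ⟨j, hjY, hjA, hj⟩ := hs.exists_exchange hsymm hnn (notMem_erase i X) hiY hle
  have hjX : j ∉ X := fun hjX => hjA (mem_erase.2 ⟨ne_of_mem_of_not_mem hjY hiY, hjX⟩)
  exact .inr ⟨j, mem_sdiff.2 ⟨hjY, hjX⟩, quadF_exchange_le h hsymm hiX hiY hjX hjY hj⟩

end quadF

theorem stmt0_general (n : ℕ) (h : Fin n → ℝ) (H : Fin n → Fin n → WithTop ℝ)
    (Hsymm : ∀ i j : Fin n, H i j = H j i) :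
    MnatConvex (quadF h H) ↔
      ((∀ i j k : Fin n, i ≠ j → j ≠ k → i ≠ k → min (H i k) (H j k) ≤ H i j) ∧
       (∀ i j : Fin n, i ≠ j → 0 ≤ H i j)) :=
  ⟨fun hM => ⟨isAntiUltrametric_of_mnatConvex_quadF h Hsymm hM,
      fun _ _ => nonneg_of_mnatConvex_quadF h Hsymm hM⟩,
    fun ⟨hs, hnn⟩ => mnatConvex_quadF h Hsymm hs hnn⟩

/-- A quadratic function on `{0,1}^n` with finite linear coefficients `h_i` and symmetric
quadratic coefficients `h_{ij} ∈ ℝ ∪ {+∞}` is M♮-convex iff `h_{ij} ≥ min{h_{ik}, h_{jk}}`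
for all distinct `i, j, k` (anti-ultrametric property) and `h_{ij} ≥ 0` for all distinct
`i, j`. -/
theorem stmt0 (n : ℕ) (hn : 1 ≤ n) (h : Fin n → ℝ) (H : Fin n → Fin n → WithTop ℝ)
    (Hsymm : ∀ i j : Fin n, H i j = H j i) :
    MnatConvex (quadF h H) ↔
      ((∀ i j k : Fin n, i ≠ j → j ≠ k → i ≠ k → min (H i k) (H j k) ≤ H i j) ∧
       (∀ i j : Fin n, i ≠ j → 0 ≤ H i j)) :=
  stmt0_general n h H Hsymm
end

section
/- Let f(x_1,…,x_r) = Σ_{i∈[r]} c_i(x_i) + Σ_{1≤i<j≤r} c_{ij}(x_i, x_j) be a function on D_1 × ⋯ × D_r with unary costs c_i : D_i → ℝ₊ and binary costs c_{ij} : D_i × D_j → ℝ₊ ∪ {+∞} satisfying c_{ij} = c_{ji}. Let U := {(i,a) : i ∈ [r], a ∈ D_i} and define the symmetric partial matrix H = (h_{(i,a),(j,b)})_{(i,a),(j,b)∈U} by h_{(i,a),(j,b)} := c_{ij}(a,b) if i ≠ j and h_{(i,a),(j,b)} undefined if i = j. Then H is M♮-convex completable if and only if f satisfies the joint winner property and is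 Z-free. -/
open Finset

/-- The quadratic function `x ↦ Σ_u h_u x_u + Σ_{{u,v} : u ≠ v} h_{uv} x_u x_v` on
`{0,1}^U`, the quadratic part summed over unordered pairs. (For symmetric `H` the value
`min (H u v) (H v u)` attached to the unordered pair `{u,v}` is exactly `h_{uv}`.) -/
noncomputable def quadFU {ι : Type*} [DecidableEq ι] (h : ι → ℝ) (H : ι → ι → WithTop ℝ)
    (S : Finset ι) : WithTop ℝ :=
  (∑ i ∈ S, (h i : WithTop ℝ)) +
    ∑ e ∈ S.sym2.filter (fun e => ¬ e.IsDiag),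
      Sym2.lift ⟨fun a b => min (H a b) (H b a), fun _ _ => min_comm _ _⟩ e

/-- The minimum of a family of values in `ℝ ∪ {+∞}` is attained at least twice. -/
def MinTwice {κ : Type*} (w : κ → WithTop ℝ) : Prop :=
  ∃ p q : κ, p ≠ q ∧ (∀ t, w p ≤ w t) ∧ w p = w q

/-- The joint winner property for the binary costs `c_{ij}`. -/
def JWP (r : ℕ) (d : Fin r → ℕ)
    (cb : ∀ i j : Fin r, Fin (d i) → Fin (d j) → WithTop ℝ) : Prop :=
  ∀ i j k : Fin r, i ≠ j → j ≠ k → i ≠ k →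
    ∀ (a : Fin (d i)) (b : Fin (d j)) (c : Fin (d k)),
      min (cb j k b c) (cb i k a c) ≤ cb i j a b

/-- Z-freeness: `|argmin{c_{ij}(a,c), c_{ij}(a,d), c_{ij}(b,c), c_{ij}(b,d)}| ≥ 2` for all
distinct `i, j ∈ [r]`, distinct `a, b ∈ D_i` and distinct `c, d ∈ D_j`. -/
def ZFree (r : ℕ) (d : Fin r → ℕ)
    (cb : ∀ i j : Fin r, Fin (d i) → Fin (d j) → WithTop ℝ) : Prop :=
  ∀ i j : Fin r, i ≠ j → ∀ a b : Fin (d i), a ≠ b → ∀ c e : Fin (d j), c ≠ e →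
    MinTwice ![cb i j a c, cb i j a e, cb i j b c, cb i j b e]


/-! For symmetric `H ≥ 0`, the quadratic function `quadFU h H` is M♮-convex exactly when `H` is
anti-ultrametric: every triangle attains its minimal side at least twice. Necessity is the
exchange axiom for `X = {u, v}`, `Y = {w}`. For sufficiency, an anti-ultrametric `V` splits
around any point into a cluster and its complement, every side between the two being the minimal
side of `V`; the exchange is found by recursing into one part, carrying along injections that do
not decrease the weights.

Restricted to the cross-block entries `c_{ij}`, anti-ultrametricity gives the JWP (triangles on
three blocks) and Z-freeness (two points in each of two blocks). Conversely, under these two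
conditions, filling each within-block entry with the least value its triangles force gives an
anti-ultrametric, nonnegative completion. -/

section AntiUltrametric

variable {ι α : Type*} [LinearOrder α]

structure IsAntiUltrametric_s2 (A : ι → ι → α) : Prop where
  symm : ∀ u v, A u v = A v u
  min_le : ∀ u v w, u ≠ v → u ≠ w → v ≠ w → min (A u w) (A v w) ≤ A u v

namespace IsAntiUltrametric_s2

variable {A : ι → ι → α}

theorem eq_of_lt (hA : IsAntiUltrametric_s2 A) {u v w : ι} (huv : u ≠ v) (huw : u ≠ w)
    (hvw : v ≠ w) (h : A u v < A u w) : A v w = A u v := by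
  refine le_antisymm ((min_le_iff.mp (hA.min_le u v w huv huw hvw)).resolve_left h.not_ge) ?_
  have := hA.min_le v w u hvw huv.symm huw.symm
  rwa [hA.symm v u, hA.symm w u, min_eq_left h.le] at this

theorem not_lt_cross (hA : IsAntiUltrametric_s2 A) {x₁ x₂ y₁ y₂ : ι} (hx : x₁ ≠ x₂)
    (h₁₁ : x₁ ≠ y₁) (h₁₂ : x₁ ≠ y₂) (h₂₁ : x₂ ≠ y₁) (h₂₂ : x₂ ≠ y₂) (h₁ : A x₁ y₁ < A x₁ y₂)
    (h₂ : A x₁ y₁ < A x₂ y₁) :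
    ¬ A x₁ y₁ < A x₂ y₂ := by
  have hx₁x₂ : A x₁ x₂ = A x₁ y₁ := by
    rw [← hA.symm y₁ x₁]
    exact hA.eq_of_lt h₁₁.symm h₂₁.symm hx (by rwa [hA.symm y₁ x₁, hA.symm y₁ x₂])
  rw [← hx₁x₂] at h₁ ⊢
  rw [hA.eq_of_lt hx h₁₂ h₂₂ h₁]
  exact lt_irrefl _

end IsAntiUltrametric_s2

end AntiUltrametric

theorem minTwice_iff_forall_exists_ne_le {κ : Type*} [Finite κ] [Nonempty κ]
    {w : κ → WithTop ℝ} : MinTwice w ↔ ∀ p, ∃ q ≠ p, w q ≤ w p := by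
  constructor
  · rintro ⟨p₀, q₀, hne, hmin, heq⟩ p
    by_cases hp : p = p₀
    · exact ⟨q₀, hp ▸ hne.symm, hp ▸ heq.symm.le⟩
    · exact ⟨p₀, Ne.symm hp, hmin p⟩
  · intro h
    obtain ⟨p, hp⟩ := Finite.exists_min w
    obtain ⟨q, hqp, hq⟩ := h p
    exact ⟨p, q, hqp.symm, hp, (hp q).antisymm hq⟩

theorem IsAntiUltrametric_s2.minTwice_cross {ι : Type*} {A : ι → ι → WithTop ℝ}
    (hA : IsAntiUltrametric_s2 A) {x₁ x₂ y₁ y₂ : ι} (hx : x₁ ≠ x₂)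
    (h₁₁ : x₁ ≠ y₁) (h₁₂ : x₁ ≠ y₂) (h₂₁ : x₂ ≠ y₁) (h₂₂ : x₂ ≠ y₂) :
    MinTwice ![A x₁ y₁, A x₁ y₂, A x₂ y₁, A x₂ y₂] := by
  rw [minTwice_iff_forall_exists_ne_le]
  intro p
  by_contra! h
  fin_cases p
  · exact hA.not_lt_cross hx h₁₁ h₁₂ h₂₁ h₂₂ (h 1 nofun) (h 2 nofun) (h 3 nofun)
  · exact hA.not_lt_cross hx h₁₂ h₁₁ h₂₂ h₂₁ (h 0 nofun) (h 3 nofun) (h 2 nofun)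
  · exact hA.not_lt_cross hx.symm h₂₁ h₂₂ h₁₁ h₁₂ (h 3 nofun) (h 0 nofun) (h 1 nofun)
  · exact hA.not_lt_cross hx.symm h₂₂ h₂₁ h₁₂ h₁₁ (h 2 nofun) (h 1 nofun) (h 0 nofun)

section Domination

variable {ι α : Type*} [LinearOrder α]

theorem Finset.exists_injOn_mapsTo_of_card_le {s t : Finset ι} (h : #s ≤ #t) :
    ∃ f : ι → ι, Set.InjOn f s ∧ Set.MapsTo f s t := by
  rcases isEmpty_or_nonempty ι with hι | hι
  · exact ⟨id, Set.injOn_id _, fun x => isEmptyElim x⟩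
  obtain ⟨f, hmaps, hinj⟩ :=
    s.finite_toSet.exists_injOn_of_encard_le (t := (t : Set ι)) (by simpa using h)
  exact ⟨f, hinj, hmaps⟩

def InjDominated (F : ι → α) (S T : Finset ι) : Prop :=
  ∃ φ : ι → ι, Set.InjOn φ S ∧ Set.MapsTo φ S T ∧ ∀ x ∈ S, F x ≤ F (φ x)

namespace InjDominated

variable {F : ι → α} {S T : Finset ι}

theorem empty (F : ι → α) (T : Finset ι) : InjDominated F ∅ T :=
  ⟨id, by simp, by simp [Set.MapsTo], by simp⟩

theorem card_le (h : InjDominated F S T) : #S ≤ #T :=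
  let ⟨φ, hinj, hmaps, _⟩ := h
  card_le_card_of_injOn φ hmaps hinj

theorem mono_right {T' : Finset ι} (h : InjDominated F S T) (hT : T ⊆ T') :
    InjDominated F S T' :=
  let ⟨φ, hinj, hmaps, hle⟩ := h
  ⟨φ, hinj, hmaps.mono_right (by simpa using hT), hle⟩

variable [DecidableEq ι]

/-- The light part of `S` is matched arbitrarily into what the given injection leaves free. -/
theorem of_filter (p : ι → Prop) [DecidablePred p] (hcard : #S ≤ #T)
    (hp : InjDominated F (S.filter p) T) (hlight : ∀ x ∈ S, ¬ p x → ∀ t ∈ T, F x ≤ F t) :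
    InjDominated F S T := by
  obtain ⟨φ, hinj, hmaps, hle⟩ := hp
  set I := (S.filter p).image φ
  have hIT : I ⊆ T := image_subset_iff.mpr fun x hx => hmaps hx
  have hcard' : #(S.filter (¬ p ·)) ≤ #(T \ I) := by
    have := card_filter_add_card_filter_not (s := S) p
    have := card_sdiff_add_card_eq_card hIT
    have : #I = #(S.filter p) := card_image_of_injOn hinj
    omega
  obtain ⟨ξ, hξinj, hξmaps⟩ := exists_injOn_mapsTo_of_card_le hcard'
  have hφI : ∀ x ∈ S, p x → φ x ∈ I := fun x hx hpx =>
    mem_image_of_mem φ (mem_filter.mpr ⟨hx, hpx⟩)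
  have hξI : ∀ x ∈ S, ¬ p x → ξ x ∈ T \ I := fun x hx hpx =>
    hξmaps (mem_filter.mpr ⟨hx, hpx⟩)
  refine ⟨fun x => if p x then φ x else ξ x, ?_, ?_, ?_⟩
  · intro x hx y hy hxy
    by_cases hpx : p x <;> by_cases hpy : p y <;> simp only [hpx, hpy, if_true, if_false] at hxy
    · exact hinj (mem_filter.mpr ⟨hx, hpx⟩) (mem_filter.mpr ⟨hy, hpy⟩) hxy
    · exact absurd (hxy ▸ hφI x hx hpx) (mem_sdiff.mp (hξI y hy hpy)).2
    · exact absurd (hxy ▸ hφI y hy hpy) (mem_sdiff.mp (hξI x hx hpx)).2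
    · exact hξinj (mem_filter.mpr ⟨hx, hpx⟩) (mem_filter.mpr ⟨hy, hpy⟩) hxy
  · intro x hx
    by_cases hpx : p x
    · simpa [hpx] using hIT (hφI x hx hpx)
    · simpa [hpx] using (mem_sdiff.mp (hξI x hx hpx)).1
  · intro x hx
    by_cases hpx : p x
    · simpa [hpx] using hle x (mem_filter.mpr ⟨hx, hpx⟩)
    · simpa [hpx] using hlight x hx hpx _ (mem_sdiff.mp (hξI x hx hpx)).1

theorem sum_add_card_nsmul_le {M : Type*} [AddCommMonoid M] [LinearOrder M]
    [IsOrderedAddMonoid M] {F : ι → M} {S T : Finset ι} (h : InjDominated F S T) {m : M}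
    (hm : ∀ t ∈ T, m ≤ F t) : ∑ x ∈ S, F x + #T • m ≤ ∑ t ∈ T, F t + #S • m := by
  obtain ⟨φ, hinj, hmaps, hle⟩ := h
  have hIT : S.image φ ⊆ T := image_subset_iff.mpr fun x hx => hmaps hx
  have hcard : #T = #(T \ S.image φ) + #S := by
    rw [← card_image_of_injOn hinj, card_sdiff_add_card_eq_card hIT]
  calc ∑ x ∈ S, F x + #T • m
      = ∑ x ∈ S, F x + #(T \ S.image φ) • m + #S • m := by rw [hcard, add_nsmul, add_assoc]
    _ ≤ ∑ x ∈ S, F (φ x) + ∑ t ∈ T \ S.image φ, F t + #S • m := by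
      gcongr with x hx
      · exact hle x hx
      · exact card_nsmul_le_sum _ _ _ fun t ht => hm t (mem_sdiff.mp ht).1
    _ = ∑ t ∈ T, F t + #S • m := by
      rw [← sum_image hinj, add_comm (∑ x ∈ S.image φ, F x), sum_sdiff hIT]

end InjDominated

end Domination

section Cluster

variable {ι α : Type*} [LinearOrder α]

structure IsCluster (A : ι → ι → α) (V C : Finset ι) (m : α) : Prop where
  le : ∀ u ∈ V, ∀ v ∈ V, u ≠ v → m ≤ A u v
  cross : ∀ x ∈ V, ∀ y ∈ V, x ∈ C → y ∉ C → A x y = m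

variable [DecidableEq ι] {A : ι → ι → α}

theorem IsAntiUltrametric_s2.exists_isCluster (hA : IsAntiUltrametric_s2 A) {V : Finset ι} {b : ι}
    (hb : b ∈ V) (hV : 1 < #V) :
    ∃ (m : α) (C : Finset ι), b ∈ C ∧ (∃ v ∈ V, v ∉ C) ∧ IsCluster A V C m := by
  have hne : V.offDiag.Nonempty := by
    obtain ⟨a, ha, c, hc, hac⟩ := one_lt_card.mp hV
    exact ⟨(a, c), mem_offDiag.mpr ⟨ha, hc, hac⟩⟩
  obtain ⟨q, hq, hqmin⟩ := V.offDiag.exists_min_image (fun q => A q.1 q.2) hne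
  obtain ⟨hq₁, hq₂, hq₁₂⟩ := mem_offDiag.mp hq
  set m := A q.1 q.2
  have hmin : ∀ u ∈ V, ∀ v ∈ V, u ≠ v → m ≤ A u v := fun u hu v hv huv =>
    hqmin (u, v) (mem_offDiag.mpr ⟨hu, hv, huv⟩)
  set C := V.filter (fun v => v = b ∨ m < A b v)
  have hbC : b ∈ C := mem_filter.mpr ⟨hb, Or.inl rfl⟩
  have hmemC : ∀ x ∈ C, x ≠ b → m < A b x := fun x hx hxb =>
    (mem_filter.mp hx).2.resolve_left hxb
  refine ⟨m, C, hbC, ?_, hmin, fun x hx y hy hxC hyC => ?_⟩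
  · by_contra! hall
    have h₁ := hall _ hq₁
    have h₂ := hall _ hq₂
    suffices m < A q.1 q.2 from lt_irrefl _ this
    by_cases hb₁ : q.1 = b
    · exact hb₁ ▸ hmemC _ h₂ (hb₁ ▸ hq₁₂.symm)
    by_cases hb₂ : q.2 = b
    · rw [hb₂, hA.symm]
      exact hmemC _ h₁ hb₁
    refine lt_of_lt_of_le (lt_min ?_ ?_) (hA.min_le _ _ b hq₁₂ hb₁ hb₂)
    · exact hA.symm b q.1 ▸ hmemC _ h₁ hb₁
    · exact hA.symm b q.2 ▸ hmemC _ h₂ hb₂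
  · have hyb : y ≠ b := fun h => hyC (h ▸ hbC)
    have hby : A b y = m := le_antisymm
      (not_lt.mp fun h => hyC (mem_filter.mpr ⟨hy, Or.inr h⟩)) (hmin b hb y hy hyb.symm)
    by_cases hxb : x = b
    · exact hxb ▸ hby
    have hxy : x ≠ y := fun h => hyC (h ▸ hxC)
    rw [hA.symm, hA.eq_of_lt hyb.symm (Ne.symm hxb) hxy.symm (hby ▸ hmemC x hxC hxb), hby]

theorem IsAntiUltrametric_s2.exists_injDominated_erase (hA : IsAntiUltrametric_s2 A)
    {X Y : Finset ι} (h : #X < #Y) : ∃ j ∈ Y, j ∉ X ∧ InjDominated (A j) X (Y.erase j) := by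
  induction hn : #(X ∪ Y) using Nat.strong_induction_on generalizing X Y with
  | _ n ih =>
  obtain ⟨y₀, hy₀Y, hy₀X⟩ := exists_mem_notMem_of_card_lt_card h
  by_cases hV : #(X ∪ Y) ≤ 1
  · have hX : X = ∅ := eq_empty_iff_forall_notMem.mpr fun x hx =>
      ne_of_mem_of_not_mem hx hy₀X
        (card_le_one.mp hV x (mem_union_left _ hx) y₀ (mem_union_right _ hy₀Y))
    exact ⟨y₀, hy₀Y, hy₀X, hX ▸ InjDominated.empty _ _⟩
  obtain ⟨m, C, hy₀C, ⟨v, hvV, hvC⟩, hC⟩ :=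
    hA.exists_isCluster (mem_union_right X hy₀Y) (not_le.mp hV)
  -- Recurse into whichever side of the cluster has more of `Y` than of `X`.
  have step : ∀ (p : ι → Prop) [DecidablePred p], (∃ v ∈ X ∪ Y, ¬ p v) →
      (∀ x ∈ X ∪ Y, ∀ y ∈ X ∪ Y, ¬ p x → p y → A y x = m) →
      #(X.filter p) < #(Y.filter p) →
      ∃ j ∈ Y, j ∉ X ∧ InjDominated (A j) X (Y.erase j) := by
    intro p _ hout hcross hlt
    have hsmall : #(X.filter p ∪ Y.filter p) < n := by
      rw [← filter_union, ← hn]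
      exact card_lt_card (filter_ssubset.mpr hout)
    obtain ⟨j, hjYp, hjX, hdom⟩ := ih _ hsmall hlt rfl
    obtain ⟨hjY, hpj⟩ := mem_filter.mp hjYp
    refine ⟨j, hjY, fun hjX' => hjX (mem_filter.mpr ⟨hjX', hpj⟩),
      InjDominated.of_filter p ?_ (hdom.mono_right (erase_subset_erase j (filter_subset _ _))) ?_⟩
    · rw [card_erase_of_mem hjY]
      omega
    · intro x hx hpx t ht
      rw [hcross x (mem_union_left _ hx) j (mem_union_right _ hjY) hpx hpj]
      exact hC.le j (mem_union_right _ hjY) t (mem_union_right _ (mem_of_mem_erase ht))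
        (ne_of_mem_erase ht).symm
  by_cases hin : #(X.filter (· ∈ C)) < #(Y.filter (· ∈ C))
  · exact step (· ∈ C) ⟨v, hvV, hvC⟩ (fun x hx y hy hxC hyC => hC.cross y hy x hx hyC hxC) hin
  · refine step (· ∉ C) ⟨y₀, mem_union_right _ hy₀Y, not_not.mpr hy₀C⟩
      (fun x hx y hy hxC hyC => (hA.symm y x).trans (hC.cross x hx y hy (not_not.mp hxC) hyC)) ?_
    have := card_filter_add_card_filter_not (s := X) (· ∈ C)
    have := card_filter_add_card_filter_not (s := Y) (· ∈ C)
    omega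

end Cluster

section Exchange

variable {ι M : Type*} [AddCommMonoid M] [LinearOrder M] [IsOrderedAddMonoid M]

theorem sum_add_sum_le_sum_add_sum_of_filter {F G : ι → M} {P Q : Finset ι} (p : ι → Prop)
    [DecidablePred p]
    (h₁ : ∑ x ∈ P.filter p, G x + ∑ y ∈ Q.filter p, F y ≤
      ∑ x ∈ P.filter p, F x + ∑ y ∈ Q.filter p, G y)
    (h₂ : ∑ x ∈ P.filter (¬ p ·), G x + ∑ y ∈ Q.filter (¬ p ·), F y ≤
      ∑ x ∈ P.filter (¬ p ·), F x + ∑ y ∈ Q.filter (¬ p ·), G y) :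
    ∑ x ∈ P, G x + ∑ y ∈ Q, F y ≤ ∑ x ∈ P, F x + ∑ y ∈ Q, G y := by
  simp only [← sum_filter_add_sum_filter_not P p, ← sum_filter_add_sum_filter_not Q p]
  calc _ = (∑ x ∈ P.filter p, G x + ∑ y ∈ Q.filter p, F y) +
        (∑ x ∈ P.filter (¬ p ·), G x + ∑ y ∈ Q.filter (¬ p ·), F y) := by abel
    _ ≤ (∑ x ∈ P.filter p, F x + ∑ y ∈ Q.filter p, G y) +
        (∑ x ∈ P.filter (¬ p ·), F x + ∑ y ∈ Q.filter (¬ p ·), G y) := add_le_add h₁ h₂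
    _ = _ := by abel

namespace IsCluster

variable [DecidableEq ι] {A : ι → ι → M} {V C P Y : Finset ι} {m : M} {i j : ι}

theorem exchange_of_injDominated (hC : IsCluster A V C m) (hsymm : ∀ u v, A u v = A v u)
    (hPV : P ⊆ V) (hYV : Y ⊆ V) (hiV : i ∈ V) (hiC : i ∈ C) (hiP : i ∉ P) (hjY : j ∈ Y)
    (hjC : j ∉ C) (hin : InjDominated (A i) (Y.filter (· ∈ C)) (P.filter (· ∈ C)))
    (hout : InjDominated (A j) (P.filter (· ∉ C)) ((Y.filter (· ∉ C)).erase j)) :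
    ∑ x ∈ P, A j x + ∑ y ∈ Y.erase j, A i y ≤ ∑ x ∈ P, A i x + ∑ y ∈ Y.erase j, A j y := by
  -- Costs across the cluster boundary all equal `m`, so each half is a counting inequality.
  have hjV := hYV hjY
  refine sum_add_sum_le_sum_add_sum_of_filter (· ∈ C) ?_ ?_
  · rw [filter_erase, erase_eq_of_notMem fun h => hjC (mem_filter.mp h).2,
      sum_eq_card_nsmul fun x hx => (hsymm j x).trans <|
        hC.cross x (hPV (mem_filter.mp hx).1) j hjV (mem_filter.mp hx).2 hjC,
      sum_eq_card_nsmul fun y hy => (hsymm j y).trans <|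
        hC.cross y (hYV (mem_filter.mp hy).1) j hjV (mem_filter.mp hy).2 hjC, add_comm]
    exact hin.sum_add_card_nsmul_le fun x hx =>
      hC.le i hiV x (hPV (mem_filter.mp hx).1) fun h => hiP (h ▸ (mem_filter.mp hx).1)
  · rw [filter_erase,
      sum_eq_card_nsmul fun x hx =>
        hC.cross i hiV x (hPV (mem_filter.mp hx).1) hiC (mem_filter.mp hx).2,
      sum_eq_card_nsmul fun y hy =>
        hC.cross i hiV y (hYV (mem_filter.mp (mem_of_mem_erase hy)).1) hiC
          (mem_filter.mp (mem_of_mem_erase hy)).2,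
      add_comm (#_ • m)]
    exact hout.sum_add_card_nsmul_le fun y hy =>
      hC.le j hjV y (hYV (mem_filter.mp (mem_of_mem_erase hy)).1) (ne_of_mem_erase hy).symm

theorem exchange_of_filter (hC : IsCluster A V C m) (hPV : P ⊆ V) (hYV : Y ⊆ V) (hiV : i ∈ V)
    (hiC : i ∈ C) (hjY : j ∈ Y) (hjC : j ∈ C)
    (h : ∑ x ∈ P.filter (· ∈ C), A j x + ∑ y ∈ (Y.filter (· ∈ C)).erase j, A i y ≤
      ∑ x ∈ P.filter (· ∈ C), A i x + ∑ y ∈ (Y.filter (· ∈ C)).erase j, A j y) :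
    ∑ x ∈ P, A j x + ∑ y ∈ Y.erase j, A i y ≤ ∑ x ∈ P, A i x + ∑ y ∈ Y.erase j, A j y := by
  refine sum_add_sum_le_sum_add_sum_of_filter (· ∈ C) (by rwa [filter_erase]) (le_of_eq ?_)
  have hij : ∀ x ∈ V, x ∉ C → A i x = A j x := fun x hx hxC =>
    (hC.cross i hiV x hx hiC hxC).trans (hC.cross j (hYV hjY) x hx hjC hxC).symm
  congr 1
  · exact sum_congr rfl fun x hx => (hij x (hPV (mem_filter.mp hx).1) (mem_filter.mp hx).2).symm
  · exact sum_congr rfl fun y hy =>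
      hij y (hYV (mem_of_mem_erase (mem_filter.mp hy).1)) (mem_filter.mp hy).2

end IsCluster

/-- The two alternatives of the M♮-exchange axiom for `X = insert i P`, `Y` and `i`. -/
theorem IsAntiUltrametric_s2.exchange [DecidableEq ι] {A : ι → ι → M} (hA : IsAntiUltrametric_s2 A)
    {P Y : Finset ι} {i : ι} (hiP : i ∉ P) (hiY : i ∉ Y) :
    InjDominated (A i) Y P ∨ ∃ j ∈ Y, j ∉ P ∧
      ∑ x ∈ P, A j x + ∑ y ∈ Y.erase j, A i y ≤ ∑ x ∈ P, A i x + ∑ y ∈ Y.erase j, A j y := by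
  induction hn : #(P ∪ Y) using Nat.strong_induction_on generalizing P Y with
  | _ n ih =>
  rcases Y.eq_empty_or_nonempty with rfl | ⟨y₁, hy₁⟩
  · exact Or.inl (InjDominated.empty _ _)
  set V := insert i (P ∪ Y)
  have hPV : P ⊆ V := subset_union_left.trans (subset_insert _ _)
  have hYV : Y ⊆ V := subset_union_right.trans (subset_insert _ _)
  have hiV : i ∈ V := mem_insert_self _ _
  obtain ⟨m, C, hiC, ⟨v, hvV, hvC⟩, hC⟩ := hA.exists_isCluster hiV
    (one_lt_card.mpr ⟨i, hiV, y₁, hYV hy₁, fun h => hiY (h ▸ hy₁)⟩)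
  have hsmall : #(P.filter (· ∈ C) ∪ Y.filter (· ∈ C)) < n := by
    rw [← filter_union, ← hn]
    refine card_lt_card (filter_ssubset.mpr ⟨v, ?_, hvC⟩)
    exact (mem_insert.mp hvV).resolve_left fun h => hvC (h ▸ hiC)
  rcases ih _ hsmall (fun h => hiP (mem_filter.mp h).1) (fun h => hiY (mem_filter.mp h).1) rfl
    with hin | ⟨j, hjY, hjP, hsum⟩
  · by_cases hcard : #(Y.filter (· ∉ C)) ≤ #(P.filter (· ∉ C))
    · refine Or.inl (InjDominated.of_filter (· ∈ C) ?_ (hin.mono_right (filter_subset _ _)) ?_)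
      · have := hin.card_le
        have := card_filter_add_card_filter_not (s := P) (· ∈ C)
        have := card_filter_add_card_filter_not (s := Y) (· ∈ C)
        omega
      · intro y hy hyC x hx
        rw [hC.cross i hiV y (hYV hy) hiC hyC]
        exact hC.le i hiV x (hPV hx) fun h => hiP (h ▸ hx)
    obtain ⟨j, hjY, hjP, hout⟩ := hA.exists_injDominated_erase (not_le.mp hcard)
    obtain ⟨hjY, hjC⟩ := mem_filter.mp hjY
    exact Or.inr ⟨j, hjY, fun h => hjP (mem_filter.mpr ⟨h, hjC⟩),
      hC.exchange_of_injDominated hA.symm hPV hYV hiV hiC hiP hjY hjC hin hout⟩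
  · obtain ⟨hjY, hjC⟩ := mem_filter.mp hjY
    exact Or.inr ⟨j, hjY, fun h => hjP (mem_filter.mpr ⟨h, hjC⟩),
      hC.exchange_of_filter hPV hYV hiV hiC hjY hjC hsum⟩

end Exchange

section Quadratic

variable {ι : Type*} [DecidableEq ι] {h : ι → ℝ} {H : ι → ι → WithTop ℝ}

theorem quadFU_empty : quadFU h H ∅ = 0 := by
  simp [quadFU]

theorem quadFU_insert (hH : ∀ u v, H u v = H v u) {S : Finset ι} {u : ι} (hu : u ∉ S) :
    quadFU h H (insert u S) = ((h u : WithTop ℝ) + ∑ x ∈ S, H u x) + quadFU h H S := by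
  have hoff : (insert u S).sym2.filter (fun e => ¬ e.IsDiag) =
      S.image (fun x => s(u, x)) ∪ S.sym2.filter (fun e => ¬ e.IsDiag) := by
    rw [sym2_insert, filter_union]
    congr 1
    ext e
    simp only [mem_filter, mem_image, mem_insert]
    constructor
    · rintro ⟨⟨b, rfl | hb, rfl⟩, hnd⟩
      · exact absurd (Sym2.mk_isDiag_iff.mpr rfl) hnd
      · exact ⟨b, hb, rfl⟩
    · rintro ⟨b, hb, rfl⟩
      exact ⟨⟨b, Or.inr hb, rfl⟩, fun hd => hu (Sym2.mk_isDiag_iff.mp hd ▸ hb)⟩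
  have hdisj : Disjoint (S.image fun x => s(u, x)) (S.sym2.filter (fun e => ¬ e.IsDiag)) := by
    rw [disjoint_left]
    rintro e he hef
    obtain ⟨b, -, rfl⟩ := mem_image.mp he
    exact hu (mk_mem_sym2_iff.mp (mem_filter.mp hef).1).1
  have himg : ∑ e ∈ S.image (fun x => s(u, x)),
      Sym2.lift ⟨fun a b => min (H a b) (H b a), fun _ _ => min_comm _ _⟩ e =
      ∑ x ∈ S, H u x := by
    rw [sum_image]
    · simp [hH]
    · intro x hx y hy hxy
      rcases Sym2.eq_iff.mp hxy with ⟨-, h⟩ | ⟨-, h₂⟩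
      · exact h
      · exact absurd (h₂ ▸ hx) hu
  rw [quadFU, quadFU, sum_insert hu, hoff, sum_union hdisj, himg]
  abel

theorem quadFU_singleton (hH : ∀ u v, H u v = H v u) (u : ι) :
    quadFU h H {u} = (h u : WithTop ℝ) := by
  simpa [quadFU_empty] using quadFU_insert (h := h) hH (S := ∅) (u := u) (by simp)

theorem quadFU_pair (hH : ∀ u v, H u v = H v u) {u v : ι} (huv : u ≠ v) :
    quadFU h H {u, v} = ((h u + h v : ℝ) : WithTop ℝ) + H u v := by
  rw [quadFU_insert hH (by simpa using huv), sum_singleton, quadFU_singleton hH]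
  push_cast
  abel

theorem IsAntiUltrametric_s2.mnatConvex_quadFU (hA : IsAntiUltrametric_s2 H)
    (h0 : ∀ u v, 0 ≤ H u v) : MnatConvex (quadFU h H) := by
  intro X Y i hi
  obtain ⟨hiX, hiY⟩ := mem_sdiff.mp hi
  have hX : quadFU h H X =
      ((h i : WithTop ℝ) + ∑ x ∈ X.erase i, H i x) + quadFU h H (X.erase i) := by
    conv_lhs => rw [← insert_erase hiX]
    exact quadFU_insert hA.symm (notMem_erase i X)
  rcases hA.exchange (notMem_erase i X) hiY with hdom | ⟨j, hjY, hjX, hsum⟩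
  · left
    have key : ∑ y ∈ Y, H i y ≤ ∑ x ∈ X.erase i, H i x := by
      simpa using hdom.sum_add_card_nsmul_le (m := 0) fun x _ => h0 i x
    rw [hX, quadFU_insert hA.symm hiY]
    calc _ = ((h i : WithTop ℝ) + ∑ y ∈ Y, H i y) + (quadFU h H (X.erase i) + quadFU h H Y) := by
          abel
      _ ≤ ((h i : WithTop ℝ) + ∑ x ∈ X.erase i, H i x) +
          (quadFU h H (X.erase i) + quadFU h H Y) := by gcongr
      _ = _ := by abel
  · right
    have hji : j ≠ i := fun h => hiY (h ▸ hjY)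
    refine ⟨j, mem_sdiff.mpr ⟨hjY, fun h => hjX (mem_erase.mpr ⟨hji, h⟩)⟩, ?_⟩
    have hY : quadFU h H Y =
        ((h j : WithTop ℝ) + ∑ y ∈ Y.erase j, H j y) + quadFU h H (Y.erase j) := by
      conv_lhs => rw [← insert_erase hjY]
      exact quadFU_insert hA.symm (notMem_erase j Y)
    rw [hX, hY, quadFU_insert hA.symm hjX, erase_insert_of_ne hji.symm,
      quadFU_insert hA.symm fun h => hiY (mem_of_mem_erase h)]
    calc _ = (∑ x ∈ X.erase i, H j x + ∑ y ∈ Y.erase j, H i y) +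
          ((h i : WithTop ℝ) + h j + quadFU h H (X.erase i) + quadFU h H (Y.erase j)) := by abel
      _ ≤ (∑ x ∈ X.erase i, H i x + ∑ y ∈ Y.erase j, H j y) +
          ((h i : WithTop ℝ) + h j + quadFU h H (X.erase i) + quadFU h H (Y.erase j)) := by
          gcongr
      _ = _ := by abel

theorem isAntiUltrametric_of_mnatConvex_quadFU (hH : ∀ u v, H u v = H v u)
    (hM : MnatConvex (quadFU h H)) : IsAntiUltrametric_s2 H := by
  refine ⟨hH, fun u v w huv huw hvw => ?_⟩
  have cancel : ∀ a b : WithTop ℝ, ((h u + h v + h w : ℝ) : WithTop ℝ) + a ≤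
      ((h u + h v + h w : ℝ) : WithTop ℝ) + b → a ≤ b := fun a b =>
    (WithTop.add_le_add_iff_left WithTop.coe_ne_top).mp
  rcases hM {u, v} {w} u (by simp [huw]) with hle | ⟨j, hj, hle⟩
  · have e : ({u, v} : Finset ι).erase u = {v} := by simp [huv]
    rw [e, quadFU_singleton hH, quadFU_pair hH huw, quadFU_pair hH huv, quadFU_singleton hH]
      at hle
    refine (min_le_left _ _).trans (cancel _ _ ?_)
    convert hle using 1 <;> push_cast <;> abel
  · obtain rfl : j = w := by simpa using (mem_sdiff.mp hj).1
    have e₁ : insert j (({u, v} : Finset ι).erase u) = {j, v} := by simp [huv]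
    have e₂ : (insert u ({j} : Finset ι)).erase j = {u} := by
      rw [erase_insert_of_ne huw, erase_singleton, insert_empty]
    rw [e₁, e₂, quadFU_pair hH (Ne.symm hvw), quadFU_singleton hH, quadFU_pair hH huv,
      quadFU_singleton hH] at hle
    refine (min_le_right _ _).trans (hH v j ▸ cancel _ _ ?_)
    convert hle using 1 <;> push_cast <;> abel

end Quadratic

section Costs

variable {r : ℕ} {d : Fin r → ℕ} {cb : ∀ i j : Fin r, Fin (d i) → Fin (d j) → WithTop ℝ}
  {H : (Σ i, Fin (d i)) → (Σ i, Fin (d i)) → WithTop ℝ}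

theorem IsAntiUltrametric_s2.jwp (hA : IsAntiUltrametric_s2 H)
    (hH : ∀ u v : Σ i, Fin (d i), u.1 ≠ v.1 → H u v = cb u.1 v.1 u.2 v.2) :
    JWP r d cb := by
  intro i j k hij hjk hik a b c
  have := hA.min_le ⟨i, a⟩ ⟨j, b⟩ ⟨k, c⟩ (by simp [hij]) (by simp [hik]) (by simp [hjk])
  rwa [hH ⟨i, a⟩ ⟨j, b⟩ hij, hH ⟨i, a⟩ ⟨k, c⟩ hik, hH ⟨j, b⟩ ⟨k, c⟩ hjk, min_comm] at this

theorem IsAntiUltrametric_s2.zFree (hA : IsAntiUltrametric_s2 H)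
    (hH : ∀ u v : Σ i, Fin (d i), u.1 ≠ v.1 → H u v = cb u.1 v.1 u.2 v.2) :
    ZFree r d cb := by
  intro i j hij a b hab c e hce
  have := hA.minTwice_cross (x₁ := ⟨i, a⟩) (x₂ := ⟨i, b⟩) (y₁ := ⟨j, c⟩) (y₂ := ⟨j, e⟩)
    (by simp [hab]) (by simp [hij]) (by simp [hij]) (by simp [hij]) (by simp [hij])
  rwa [hH ⟨i, a⟩ ⟨j, c⟩ hij, hH ⟨i, a⟩ ⟨j, e⟩ hij, hH ⟨i, b⟩ ⟨j, c⟩ hij,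
    hH ⟨i, b⟩ ⟨j, e⟩ hij] at this

end Costs

section Completion

variable {r : ℕ} {d : Fin r → ℕ} (cb : ∀ i j : Fin r, Fin (d i) → Fin (d j) → WithTop ℝ)

/-- The least value that a within-block entry `(u, v)` can take in an anti-ultrametric
completion: the triangles `u, v, t` force it above `min (c(u,t), c(v,t))` for each `t` in another
block. The `0` for `t` in the block of `u` lets the supremum run over all of `U`. -/
noncomputable def blockFill (u v : Σ i, Fin (d i)) : WithTop ℝ :=
  univ.sup' ⟨u, mem_univ u⟩ fun t =>
    if t.1 = u.1 then 0 else min (cb u.1 t.1 u.2 t.2) (cb v.1 t.1 v.2 t.2)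

noncomputable def completion (u v : Σ i, Fin (d i)) : WithTop ℝ :=
  if u.1 = v.1 then blockFill cb u v else cb u.1 v.1 u.2 v.2

variable {cb}

theorem min_le_blockFill {u v t : Σ i, Fin (d i)} (ht : t.1 ≠ u.1) :
    min (cb u.1 t.1 u.2 t.2) (cb v.1 t.1 v.2 t.2) ≤ blockFill cb u v :=
  le_sup'_of_le _ (mem_univ t) (by simp [ht])

theorem blockFill_nonneg (u v : Σ i, Fin (d i)) : 0 ≤ blockFill cb u v :=
  le_sup'_of_le _ (mem_univ u) (by simp)

theorem exists_lt_of_lt_blockFill {u v : Σ i, Fin (d i)} {c : WithTop ℝ} (hc : 0 ≤ c)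
    (h : c < blockFill cb u v) :
    ∃ t : Σ i, Fin (d i), t.1 ≠ u.1 ∧ c < cb u.1 t.1 u.2 t.2 ∧ c < cb v.1 t.1 v.2 t.2 := by
  obtain ⟨t, -, ht⟩ := (lt_sup'_iff _).mp h
  by_cases htu : t.1 = u.1
  · simp [htu] at ht
    exact absurd hc ht.not_ge
  · simp only [htu, if_false, lt_min_iff] at ht
    exact ⟨t, htu, ht⟩

theorem completion_of_eq {u v : Σ i, Fin (d i)} (h : u.1 = v.1) :
    completion cb u v = blockFill cb u v :=
  if_pos h

theorem completion_of_ne {u v : Σ i, Fin (d i)} (h : u.1 ≠ v.1) :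
    completion cb u v = cb u.1 v.1 u.2 v.2 :=
  if_neg h

theorem completion_comm (hcbs : ∀ i j a b, cb i j a b = cb j i b a) (u v : Σ i, Fin (d i)) :
    completion cb u v = completion cb v u := by
  by_cases h : u.1 = v.1
  · rw [completion_of_eq h, completion_of_eq h.symm]
    simp only [blockFill, h, min_comm]
  · rw [completion_of_ne h, completion_of_ne (Ne.symm h), hcbs]

theorem completion_nonneg (hcb0 : ∀ i j a b, 0 ≤ cb i j a b) (u v : Σ i, Fin (d i)) :
    0 ≤ completion cb u v := by
  by_cases h : u.1 = v.1
  · exact (completion_of_eq h).symm ▸ blockFill_nonneg u v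
  · exact (completion_of_ne h).symm ▸ hcb0 _ _ _ _

theorem JWP.not_lt_cross (hcbs : ∀ i j a b, cb i j a b = cb j i b a) (hjwp : JWP r d cb)
    (hzf : ZFree r d cb) {x y s t : Σ i, Fin (d i)} (hxy : x.1 = y.1) (hne : x ≠ y)
    (hs : s.1 ≠ x.1) (ht : t.1 ≠ x.1) (h₁ : cb x.1 s.1 x.2 s.2 < cb x.1 t.1 x.2 t.2)
    (h₂ : cb x.1 s.1 x.2 s.2 < cb y.1 s.1 y.2 s.2) :
    ¬ cb x.1 s.1 x.2 s.2 < cb y.1 t.1 y.2 t.2 := by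
  obtain ⟨i, a⟩ := x
  obtain ⟨i', b⟩ := y
  obtain ⟨k, s⟩ := s
  obtain ⟨l, t⟩ := t
  dsimp only at hxy hs ht h₁ h₂ ⊢
  subst hxy
  intro h₃
  by_cases hkl : k = l
  · subst hkl
    have hst : s ≠ t := by rintro rfl; exact lt_irrefl _ h₁
    obtain ⟨q, hq, hle⟩ := minTwice_iff_forall_exists_ne_le.mp
      (hzf i k (Ne.symm hs) a b (by simpa using hne) s t hst) 0
    fin_cases q
    · exact hq rfl
    · exact hle.not_gt h₁
    · exact hle.not_gt h₂
    · exact hle.not_gt h₃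
  · have hkl' : cb k l s t ≤ cb i k a s :=
      (min_le_iff.mp (hjwp i k l (Ne.symm hs) hkl (Ne.symm ht) a s t)).resolve_right h₁.not_ge
    have := hjwp k l i hkl ht hs s t b
    rw [hcbs l i t b, hcbs k i s b] at this
    exact (lt_min h₃ h₂).not_ge (this.trans hkl')

theorem min_blockFill_le (hcbs : ∀ i j a b, cb i j a b = cb j i b a) (hjwp : JWP r d cb)
    (hzf : ZFree r d cb) (hcb0 : ∀ i j a b, 0 ≤ cb i j a b) {x y z : Σ i, Fin (d i)}
    (hxy : x.1 = y.1) (hz : z.1 ≠ x.1) :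
    min (blockFill cb x y) (cb y.1 z.1 y.2 z.2) ≤ cb x.1 z.1 x.2 z.2 := by
  by_contra! h
  obtain ⟨hx, hy⟩ := lt_min_iff.mp h
  obtain ⟨t, ht, hxt, hyt⟩ := exists_lt_of_lt_blockFill (hcb0 _ _ _ _) hx
  have hne : x ≠ y := by rintro rfl; exact lt_irrefl _ hy
  exact JWP.not_lt_cross hcbs hjwp hzf hxy hne hz ht hxt hy hyt

theorem min_blockFill_le_blockFill (hcbs : ∀ i j a b, cb i j a b = cb j i b a)
    (hjwp : JWP r d cb) (hzf : ZFree r d cb) {u v w : Σ i, Fin (d i)} (huv : u.1 = v.1)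
    (hvw : v.1 = w.1) (hne : v ≠ w) : min (blockFill cb u w) (blockFill cb v w) ≤ blockFill cb u v := by
  by_contra! h
  obtain ⟨hu, hv⟩ := lt_min_iff.mp h
  obtain ⟨s, hs, hus, hws⟩ := exists_lt_of_lt_blockFill (blockFill_nonneg u v) hu
  obtain ⟨t, ht, hvt, hwt⟩ := exists_lt_of_lt_blockFill (blockFill_nonneg u v) hv
  have hvs : cb v.1 s.1 v.2 s.2 ≤ blockFill cb u v :=
    (min_le_iff.mp (min_le_blockFill hs)).resolve_left hus.not_ge
  exact JWP.not_lt_cross hcbs hjwp hzf hvw hne (huv ▸ hs) ht (hvs.trans_lt hvt)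
    (hvs.trans_lt hws) (hvs.trans_lt hwt)

theorem isAntiUltrametric_completion (hcb0 : ∀ i j a b, 0 ≤ cb i j a b)
    (hcbs : ∀ i j a b, cb i j a b = cb j i b a) (hjwp : JWP r d cb) (hzf : ZFree r d cb) :
    IsAntiUltrametric_s2 (completion cb) := by
  refine ⟨completion_comm hcbs, fun u v w huv huw hvw => ?_⟩
  by_cases h₁ : u.1 = v.1 <;> by_cases h₂ : u.1 = w.1 <;> by_cases h₃ : v.1 = w.1
  · rw [completion_of_eq h₁, completion_of_eq h₂, completion_of_eq h₃]
    exact min_blockFill_le_blockFill hcbs hjwp hzf h₁ h₃ hvw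
  · exact absurd (h₁.symm.trans h₂) h₃
  · exact absurd (h₁.trans h₃) h₂
  · rw [completion_of_eq h₁, completion_of_ne h₂, completion_of_ne h₃]
    exact min_le_blockFill (Ne.symm h₂)
  · exact absurd (h₂.trans h₃.symm) h₁
  · rw [completion_of_ne h₁, completion_of_eq h₂, completion_of_ne h₃, hcbs v.1]
    exact min_blockFill_le hcbs hjwp hzf hcb0 h₂ (Ne.symm h₁)
  · rw [completion_of_ne h₁, completion_of_ne h₂, completion_of_eq h₃, hcbs u.1, hcbs u.1,
      min_comm]
    exact min_blockFill_le hcbs hjwp hzf hcb0 h₃ h₁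
  · rw [completion_of_ne h₁, completion_of_ne h₂, completion_of_ne h₃, min_comm]
    exact hjwp _ _ _ h₁ h₃ h₂ _ _ _

end Completion

theorem stmt2_general (r : ℕ) (d : Fin r → ℕ)
    (cb : ∀ i j : Fin r, Fin (d i) → Fin (d j) → WithTop ℝ)
    (hcb0 : ∀ i j a b, 0 ≤ cb i j a b)
    (hcbs : ∀ i j a b, cb i j a b = cb j i b a) :
    (∃ H' : ((i : Fin r) × Fin (d i)) → ((i : Fin r) × Fin (d i)) → WithTop ℝ,
      (∀ u v, H' u v = H' v u) ∧
      (∀ u v : (i : Fin r) × Fin (d i), u.1 ≠ v.1 → H' u v = cb u.1 v.1 u.2 v.2) ∧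
      (∃ h : ((i : Fin r) × Fin (d i)) → ℝ, MnatConvex (quadFU h H'))) ↔
    (JWP r d cb ∧ ZFree r d cb) := by
  constructor
  · rintro ⟨H, hsymm, hcb, h, hM⟩
    have hA := isAntiUltrametric_of_mnatConvex_quadFU hsymm hM
    exact ⟨hA.jwp hcb, hA.zFree hcb⟩
  · rintro ⟨hjwp, hzf⟩
    have hA := isAntiUltrametric_completion hcb0 hcbs hjwp hzf
    exact ⟨completion cb, hA.symm, fun _ _ => completion_of_ne, 0,
      hA.mnatConvex_quadFU (completion_nonneg hcb0)⟩

/-- For `f(x) = Σ_i c_i(x_i) + Σ_{i<j} c_{ij}(x_i,x_j)` with nonnegative costs, the partial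
matrix `H` over `U = {(i,a) : i ∈ [r], a ∈ D_i}` given by `h_{(i,a),(j,b)} = c_{ij}(a,b)`
for `i ≠ j` (and undefined for `i = j`) is M♮-convex completable iff `f` satisfies the joint
winner property and is Z-free. -/
theorem stmt2 (r : ℕ) (d : Fin r → ℕ) (hd : ∀ i, 2 ≤ d i)
    (cu : ∀ i : Fin r, Fin (d i) → ℝ) (hcu : ∀ i a, 0 ≤ cu i a)
    (cb : ∀ i j : Fin r, Fin (d i) → Fin (d j) → WithTop ℝ)
    (hcb0 : ∀ i j a b, 0 ≤ cb i j a b)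
    (hcbs : ∀ i j a b, cb i j a b = cb j i b a) :
    (∃ H' : ((i : Fin r) × Fin (d i)) → ((i : Fin r) × Fin (d i)) → WithTop ℝ,
      (∀ u v, H' u v = H' v u) ∧
      (∀ u v : (i : Fin r) × Fin (d i), u.1 ≠ v.1 → H' u v = cb u.1 v.1 u.2 v.2) ∧
      (∃ h : ((i : Fin r) × Fin (d i)) → ℝ, MnatConvex (quadFU h H'))) ↔
    (JWP r d cb ∧ ZFree r d cb) :=
  stmt2_general r d cb hcb0 hcbs
end

section
/- Let f(x_1,…,x_r) = Σ_{i∈[r]} c_i(x_i) + Σ_{1≤i<j≤r} c_{ij}(x_i, x_j) with c_i : D_i → ℝ₊ and c_{ij} : D_i × D_j → ℝ₊ ∪ {+∞}, c_{ij} = c_{ji}, and suppose f satisfies the joint winner property and is Z-free. Let U := {(i,a) : i ∈ [r], a ∈ D_i} and let f̂ : {0,1}^U → ℝ ∪ {+∞} be defined by f̂(x̂) := f(x) if x̂ is the indicator vector of some x ∈ D_1 × ⋯ × D_r and f̂(x̂) := +∞ otherwise. Then f̂ is M♮₂-convex, i.e., f̂ can be written as the sum of two M♮-convex functions on {0,1}^U.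 -/
open Finset
open scoped Classical

/-- The indicator vector (as a subset of `U = {(i,a) : i ∈ [r], a ∈ D_i}`) of an assignment
`x ∈ D_1 × ⋯ × D_r`: it contains `(i,a)` iff `x_i = a`. -/
def enc (r : ℕ) (d : Fin r → ℕ) (x : ∀ i : Fin r, Fin (d i)) :
    Finset ((i : Fin r) × Fin (d i)) :=
  Finset.univ.image fun i : Fin r => ⟨i, x i⟩

/-- The VCSP objective `f(x) = Σ_{i∈[r]} c_i(x_i) + Σ_{1≤i<j≤r} c_{ij}(x_i, x_j)`. -/
noncomputable def fval (r : ℕ) (d : Fin r → ℕ) (cu : ∀ i : Fin r, Fin (d i) → ℝ)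
    (cb : ∀ i j : Fin r, Fin (d i) → Fin (d j) → WithTop ℝ)
    (x : ∀ i : Fin r, Fin (d i)) : WithTop ℝ :=
  (∑ i : Fin r, ((cu i (x i) : ℝ) : WithTop ℝ)) +
    ∑ p ∈ (Finset.univ ×ˢ Finset.univ : Finset (Fin r × Fin r)).filter
        (fun p => p.1 < p.2),
      cb p.1 p.2 (x p.1) (x p.2)

/-- `f̂ : {0,1}^U → ℝ ∪ {+∞}`: `f̂(x̂) = f(x)` if `x̂` is the indicator vector of some `x`,
and `+∞` otherwise. -/
noncomputable def fhat (r : ℕ) (d : Fin r → ℕ) (cu : ∀ i : Fin r, Fin (d i) → ℝ)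
    (cb : ∀ i j : Fin r, Fin (d i) → Fin (d j) → WithTop ℝ)
    (S : Finset ((i : Fin r) × Fin (d i))) : WithTop ℝ :=
  if h : ∃ x : ∀ i : Fin r, Fin (d i), enc r d x = S then fval r d cu cb h.choose else ⊤

/-!
Write `f̂ = g₁ + g₂`. The first summand `g₁(S) = Σ_{u ∈ S} c(u)`, finite only when `S` meets each
`D_i` at most once, is linear on the independent sets of a partition matroid, hence M♮-convex.

For the second, extend the pair costs to pairs `u ≠ v` inside one `D_i` by
`a(u, v) = max(0, max_w min(c(u, w), c(v, w)))`, and put `a(u, u) = ⊤`. The joint winner property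
and Z-freeness are exactly what make `a` an ultrametric similarity,
`min(a(u, w), a(w, v)) ≤ a(u, v)`, so that for every level `α` the sets `{v | α ≤ a(u, v)}`
partition `U`, and these partitions refine each other as `α` grows. Now
`g₂(S) = ½ Σ_{u ≠ v ∈ S} a(u, v)` on `|S| = r` (and `⊤` elsewhere) agrees with
`Σ_{i<j} c_{ij}(x_i, x_j)` on indicator vectors, and it is M♮-convex: given `i ∈ X \ Y`, descending
through the classes yields `j ∈ Y \ X` such that every class containing `i` but not `j` has more
elements of `X` than of `Y`, and every class containing `j` but not `i` more of `Y` than of `X`.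
Counting, for each level `α`, the terms `≥ α` on both sides of the exchange inequality then shows
that swapping `i` and `j` does not increase `g₂(X) + g₂(Y)`.
-/

theorem Multiset.sum_le_sum_of_card_filter_le_s10 {M : Type*} [AddCommMonoid M] [LinearOrder M]
    [IsOrderedAddMonoid M] {s t : Multiset M} (hcard : card s = card t)
    (h : ∀ α, card (s.filter (α ≤ ·)) ≤ card (t.filter (α ≤ ·))) : s.sum ≤ t.sum := by
  induction s using Multiset.strongInductionOn generalizing t with
  | ih s ih =>
  rcases eq_or_ne s 0 with rfl | hs
  · rw [card_zero, eq_comm, card_eq_zero] at hcard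
    simp [hcard]
  obtain ⟨m, hm, hmax⟩ := s.exists_max_image id hs
  obtain ⟨m', hm't, hmm'⟩ : ∃ m' ∈ t, m ≤ m' := by
    obtain ⟨m', hm'⟩ := card_pos_iff_exists_mem.1
      ((card_pos_iff_exists_mem.2 ⟨m, mem_filter.2 ⟨hm, le_rfl⟩⟩).trans_le (h m))
    exact ⟨m', (mem_filter.1 hm').1, (mem_filter.1 hm').2⟩
  obtain ⟨s', rfl⟩ := exists_cons_of_mem hm
  obtain ⟨t', rfl⟩ := exists_cons_of_mem hm't
  rw [sum_cons, sum_cons]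
  refine add_le_add hmm' (ih s' (lt_cons_self s' m) (by simpa using hcard) fun α => ?_)
  by_cases hα : α ≤ m
  · simpa [filter_cons_of_pos _ hα, filter_cons_of_pos _ (hα.trans hmm')] using h α
  · rw [card_eq_zero.2 (filter_eq_nil.2 fun x hx => ?_)]
    · exact Nat.zero_le _
    · exact fun hαx => hα (hαx.trans (hmax x (mem_cons_of_mem hx)))

structure IsUltrasimilarity {V M : Type*} [LinearOrder M] [OrderTop M] (a : V → V → M) :
    Prop where
  symm : ∀ u v, a u v = a v u
  self : ∀ u, a u u = ⊤
  min_le : ∀ u v w, min (a u w) (a w v) ≤ a u v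

lemma IsUltrasimilarity.comp {V M M' : Type*} [LinearOrder M] [OrderTop M] [LinearOrder M']
    [OrderTop M'] {a : V → V → M} (ha : IsUltrasimilarity a) {f : M → M'} (hf : Monotone f)
    (htop : f ⊤ = ⊤) : IsUltrasimilarity fun u v => f (a u v) where
  symm u v := by rw [ha.symm]
  self u := by rw [ha.self, htop]
  min_le u v w := hf.map_min.symm.trans_le (hf (ha.min_le u v w))

section Levels

variable {V M : Type*} [Fintype V] [LinearOrder M] {a : V → V → M}

def levelClass (a : V → V → M) (α : M) (w : V) : Finset V := {u | α ≤ a w u}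

def levels (a : V → V → M) : Finset M := univ.image fun p : V × V => a p.1 p.2

@[simp] lemma mem_levelClass {α : M} {w u : V} : u ∈ levelClass a α w ↔ α ≤ a w u := by
  simp [levelClass]

lemma apply_mem_levels (u v : V) : a u v ∈ levels a :=
  mem_image.2 ⟨(u, v), mem_univ _, rfl⟩

lemma levelClass_anti {α β : M} (h : α ≤ β) (w : V) : levelClass a β w ⊆ levelClass a α w :=
  fun _ hu => mem_levelClass.2 (h.trans (mem_levelClass.1 hu))

lemma filter_le_eq_inter_levelClass [DecidableEq V] (S : Finset V) (α : M) (w : V) :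
    S.filter (α ≤ a w ·) = S ∩ levelClass a α w := by
  ext u
  simp

end Levels

namespace IsUltrasimilarity

variable {V M : Type*} [Fintype V] [LinearOrder M] [OrderTop M] {a : V → V → M}

lemma mem_levelClass_self (ha : IsUltrasimilarity a) (α : M) (w : V) : w ∈ levelClass a α w := by
  simp [ha.self]

lemma levelClass_eq (ha : IsUltrasimilarity a) {α : M} {v w : V} (h : v ∈ levelClass a α w) :
    levelClass a α v = levelClass a α w := by
  have hwv := mem_levelClass.1 h
  ext u
  simp only [mem_levelClass]
  constructor
  · exact fun hvu => (le_min hwv hvu).trans (ha.min_le w u v)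
  · exact fun hwu => (le_min (ha.symm v w ▸ hwv) hwu).trans (ha.min_le v u w)

lemma exists_mem_levels_levelClass_eq (ha : IsUltrasimilarity a) (α : M) (w : V) :
    ∃ l ∈ levels a, α ≤ l ∧ levelClass a α w = levelClass a l w := by
  have hne : ((univ.image (a w)).filter (α ≤ ·)).Nonempty :=
    ⟨⊤, mem_filter.2 ⟨mem_image.2 ⟨w, mem_univ _, ha.self w⟩, le_top⟩⟩
  obtain ⟨hl, hαl⟩ := mem_filter.1 (min'_mem _ hne)
  obtain ⟨u, -, hu⟩ := mem_image.1 hl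
  refine ⟨_, hu ▸ apply_mem_levels w u, hαl, ?_⟩
  ext v
  simp only [mem_levelClass]
  refine ⟨fun hv => min'_le _ _ (mem_filter.2 ⟨mem_image.2 ⟨v, mem_univ _, rfl⟩, hv⟩),
    hαl.trans⟩

lemma forall_levelClass_of_forall_levels (ha : IsUltrasimilarity a) {P : Finset V → Prop}
    {β : M} {w : V}
    (h : ∀ l ∈ levels a, β < l → P (levelClass a l w)) (α : M) (hα : β < α) :
    P (levelClass a α w) := by
  obtain ⟨l, hl, hαl, heq⟩ := ha.exists_mem_levels_levelClass_eq α w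
  exact heq ▸ h l hl (hα.trans_le hαl)

lemma levelClass_subset_of_mem (ha : IsUltrasimilarity a) {β β' : M} (h : β ≤ β') {w x : V}
    (hx : x ∈ levelClass a β w) : levelClass a β' x ⊆ levelClass a β w :=
  (levelClass_anti h x).trans (ha.levelClass_eq hx).subset

variable [DecidableEq V] {X Y : Finset V}

lemma card_inter_eq_sum (ha : IsUltrasimilarity a) {β : M} {G : Finset V}
    (hG : ∀ x ∈ G, levelClass a β x ⊆ G) (Z : Finset V) :
    (Z ∩ G).card = ∑ D ∈ G.image (levelClass a β), (Z ∩ D).card := by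
  rw [card_eq_sum_card_fiberwise (f := levelClass a β)
    (fun z hz => mem_image_of_mem _ (mem_inter.1 hz).2)]
  refine sum_congr rfl fun D hD => ?_
  obtain ⟨x, hx, rfl⟩ := mem_image.1 hD
  congr 1
  ext z
  simp only [mem_filter, mem_inter]
  constructor
  · rintro ⟨⟨hz, -⟩, hzx⟩
    exact ⟨hz, hzx ▸ ha.mem_levelClass_self β z⟩
  · rintro ⟨hz, hzx⟩
    exact ⟨⟨hz, hG x hx hzx⟩, ha.levelClass_eq hzx⟩

lemma exists_forall_levels_card_inter_lt (ha : IsUltrasimilarity a) {β : M} {w : V}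
    (h : (X ∩ levelClass a β w).card < (Y ∩ levelClass a β w).card) :
    ∃ j ∈ levelClass a β w, j ∈ Y \ X ∧ ∀ l ∈ levels a, β ≤ l →
      (X ∩ levelClass a l j).card < (Y ∩ levelClass a l j).card := by
  induction hn : ((levels a).filter (β < ·)).card using Nat.strong_induction_on
    generalizing β w with
  | _ n ih =>
  suffices ∃ j ∈ levelClass a β w, j ∈ Y \ X ∧ ∀ l ∈ levels a, β < l →
      (X ∩ levelClass a l j).card < (Y ∩ levelClass a l j).card by
    obtain ⟨j, hjG, hjYX, hj⟩ := this
    refine ⟨j, hjG, hjYX, fun l hl hβl => ?_⟩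
    rcases hβl.eq_or_lt with rfl | hβl
    · rwa [ha.levelClass_eq hjG]
    · exact hj l hl hβl
  rcases ((levels a).filter (β < ·)).eq_empty_or_nonempty with hempty | hne
  · obtain ⟨j, hjYG, hjXG⟩ := exists_mem_notMem_of_card_lt_card h
    refine ⟨j, (mem_inter.1 hjYG).2, mem_sdiff.2 ⟨(mem_inter.1 hjYG).1,
      fun hjX => hjXG (mem_inter.2 ⟨hjX, (mem_inter.1 hjYG).2⟩)⟩, fun l hl hβl => ?_⟩
    exact absurd (mem_filter.2 ⟨hl, hβl⟩) (hempty ▸ notMem_empty l)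
  set β' := ((levels a).filter (β < ·)).min' hne
  have hβ' : β < β' := (mem_filter.1 (min'_mem _ hne)).2
  have hG : ∀ x ∈ levelClass a β w, levelClass a β' x ⊆ levelClass a β w :=
    fun x hx => ha.levelClass_subset_of_mem hβ'.le hx
  obtain ⟨D, hD, hDheavy⟩ : ∃ D ∈ (levelClass a β w).image (levelClass a β'),
      (X ∩ D).card < (Y ∩ D).card := by
    apply exists_lt_of_sum_lt
    rwa [← ha.card_inter_eq_sum hG, ← ha.card_inter_eq_sum hG]
  obtain ⟨x, hx, rfl⟩ := mem_image.1 hD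
  have hlt : ((levels a).filter (β' < ·)).card < n := by
    refine hn ▸ card_lt_card ⟨fun l hl => ?_, fun hsub => ?_⟩
    · exact mem_filter.2 ⟨(mem_filter.1 hl).1, hβ'.trans (mem_filter.1 hl).2⟩
    · exact lt_irrefl β' (mem_filter.1 (hsub (min'_mem _ hne))).2
  obtain ⟨j, hjD, hjYX, hj⟩ := ih _ hlt hDheavy rfl
  exact ⟨j, hG x hx hjD, hjYX, fun l hl hβl => hj l hl (min'_le _ _ (mem_filter.2 ⟨hl, hβl⟩))⟩

lemma exists_partner_of_card_inter_le (ha : IsUltrasimilarity a) {β : M} {i : V} (hi : i ∈ X \ Y)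
    (hG : (X ∩ levelClass a β i).card ≤ (Y ∩ levelClass a β i).card)
    (habove : ∀ l ∈ levels a, β < l →
      (Y ∩ levelClass a l i).card < (X ∩ levelClass a l i).card) :
    ∃ j ∈ levelClass a β i, j ∈ Y \ X ∧ ∀ l ∈ levels a, β < l →
      (X ∩ levelClass a l j).card < (Y ∩ levelClass a l j).card := by
  rcases ((levels a).filter (β < ·)).eq_empty_or_nonempty with hempty | hne
  · have hiXG : i ∈ X ∩ levelClass a β i :=
      mem_inter.2 ⟨(mem_sdiff.1 hi).1, ha.mem_levelClass_self β i⟩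
    obtain ⟨j, hjYG, hjXG⟩ :=
      exists_mem_notMem_of_card_lt_card ((card_erase_lt_of_mem hiXG).trans_le hG)
    have hji : j ≠ i := fun hji => (mem_sdiff.1 hi).2 (hji ▸ (mem_inter.1 hjYG).1)
    refine ⟨j, (mem_inter.1 hjYG).2, mem_sdiff.2 ⟨(mem_inter.1 hjYG).1,
      fun hjX => hjXG (mem_erase.2 ⟨hji, mem_inter.2 ⟨hjX, (mem_inter.1 hjYG).2⟩⟩)⟩,
      fun l hl hβl => ?_⟩
    exact absurd (mem_filter.2 ⟨hl, hβl⟩) (hempty ▸ notMem_empty l)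
  set β' := ((levels a).filter (β < ·)).min' hne
  have hβ' : β < β' := (mem_filter.1 (min'_mem _ hne)).2
  have hβ'levels : β' ∈ levels a := (mem_filter.1 (min'_mem _ hne)).1
  have hsub : ∀ x ∈ levelClass a β i, levelClass a β' x ⊆ levelClass a β i :=
    fun x hx => ha.levelClass_subset_of_mem hβ'.le hx
  obtain ⟨D, hD, hDheavy⟩ : ∃ D ∈ (levelClass a β i).image (levelClass a β'),
      (X ∩ D).card < (Y ∩ D).card := by
    by_contra! hall
    refine (sum_lt_sum hall ⟨_, mem_image_of_mem _ (ha.mem_levelClass_self β i),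
      habove β' hβ'levels hβ'⟩).not_ge ?_
    rwa [← ha.card_inter_eq_sum hsub, ← ha.card_inter_eq_sum hsub]
  obtain ⟨x, hx, rfl⟩ := mem_image.1 hD
  obtain ⟨j, hjD, hjYX, hj⟩ := ha.exists_forall_levels_card_inter_lt hDheavy
  exact ⟨j, hsub x hx hjD, hjYX, fun l hl hβl => hj l hl (min'_le _ _ (mem_filter.2 ⟨hl, hβl⟩))⟩

lemma exists_partner_forall_lt (ha : IsUltrasimilarity a) (hXY : X.card = Y.card) {i : V}
    (hi : i ∈ X \ Y) :
    ∃ j ∈ Y \ X, ∀ α, a i j < α →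
      (X ∩ levelClass a α j).card < (Y ∩ levelClass a α j).card ∧
      (Y ∩ levelClass a α i).card < (X ∩ levelClass a α i).card := by
  -- `T.max'` is the highest level at which the class of `i` is not heavier in `X`; `T` is
  -- nonempty because at the lowest level that class is all of `V`.
  set T := (levels a).filter
    fun l => (X ∩ levelClass a l i).card ≤ (Y ∩ levelClass a l i).card
  have hT : T.Nonempty := by
    have hne : (levels a).Nonempty := ⟨_, apply_mem_levels i i⟩
    refine ⟨_, mem_filter.2 ⟨min'_mem _ hne, ?_⟩⟩
    rw [eq_univ_of_forall fun u => mem_levelClass.2 (min'_le _ _ (apply_mem_levels i u))]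
    simp [hXY]
  obtain ⟨hβ, hG⟩ := mem_filter.1 (max'_mem T hT)
  have habove : ∀ l ∈ levels a, T.max' hT < l →
      (Y ∩ levelClass a l i).card < (X ∩ levelClass a l i).card := fun l hl hlt => by
    by_contra! h
    exact (le_max' T l (mem_filter.2 ⟨hl, h⟩)).not_gt hlt
  obtain ⟨j, hjG, hjYX, hj⟩ := ha.exists_partner_of_card_inter_le hi hG habove
  refine ⟨j, hjYX, fun α hα => ?_⟩
  have hβα := (mem_levelClass.1 hjG).trans_lt hα
  exact ⟨ha.forall_levelClass_of_forall_levels (P := fun C => (X ∩ C).card < (Y ∩ C).card)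
      hj α hβα,
    ha.forall_levelClass_of_forall_levels (P := fun C => (Y ∩ C).card < (X ∩ C).card)
      habove α hβα⟩

lemma card_filter_exchange_le (ha : IsUltrasimilarity a) {i j : V} (hi : i ∈ X \ Y)
    (hj : j ∈ Y \ X) (α : M) (hα : a i j < α →
      (X ∩ levelClass a α j).card < (Y ∩ levelClass a α j).card ∧
      (Y ∩ levelClass a α i).card < (X ∩ levelClass a α i).card) :
    ((X.erase i).filter (α ≤ a j ·)).card + ((Y.erase j).filter (α ≤ a i ·)).card ≤
      ((X.erase i).filter (α ≤ a i ·)).card + ((Y.erase j).filter (α ≤ a j ·)).card := by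
  simp only [filter_le_eq_inter_levelClass, erase_inter]
  by_cases hαij : α ≤ a i j
  · rw [ha.levelClass_eq (mem_levelClass.2 hαij), add_comm]
  obtain ⟨hj_heavy, hi_heavy⟩ := hα (not_le.1 hαij)
  have hiC : i ∉ levelClass a α j := by rwa [mem_levelClass, ← ha.symm]
  have hjC : j ∉ levelClass a α i := by rwa [mem_levelClass]
  rw [erase_eq_of_notMem fun h => hiC (mem_inter.1 h).2,
    erase_eq_of_notMem fun h => hjC (mem_inter.1 h).2,
    card_erase_of_mem (mem_inter.2 ⟨(mem_sdiff.1 hi).1, ha.mem_levelClass_self α i⟩),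
    card_erase_of_mem (mem_inter.2 ⟨(mem_sdiff.1 hj).1, ha.mem_levelClass_self α j⟩)]
  omega

theorem exists_sum_exchange_le [AddCommMonoid M] [IsOrderedAddMonoid M]
    (ha : IsUltrasimilarity a) (hXY : X.card = Y.card) {i : V} (hi : i ∈ X \ Y) :
    ∃ j ∈ Y \ X, ∑ u ∈ X.erase i, a j u + ∑ v ∈ Y.erase j, a i v ≤
      ∑ u ∈ X.erase i, a i u + ∑ v ∈ Y.erase j, a j v := by
  obtain ⟨j, hj, hpartner⟩ := ha.exists_partner_forall_lt hXY hi
  refine ⟨j, hj, ?_⟩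
  have := Multiset.sum_le_sum_of_card_filter_le_s10
    (s := (X.erase i).val.map (a j) + (Y.erase j).val.map (a i))
    (t := (X.erase i).val.map (a i) + (Y.erase j).val.map (a j)) (by simp) fun α => by
      simpa only [Multiset.filter_add, Multiset.card_add, Multiset.filter_map, Multiset.card_map,
        Function.comp_def, ← Finset.filter_val, ← Finset.card_def] using
        ha.card_filter_exchange_le hi hj α (hpartner α)
  simpa only [Multiset.sum_add, sum_map_val] using this

end IsUltrasimilarity

section PairSum

variable {V M : Type*} [DecidableEq V] [AddCommMonoid M]

def pairSum (a : V → V → M) (S : Finset V) : M := ∑ u ∈ S, ∑ v ∈ S.erase u, a u v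

lemma pairSum_insert {a : V → V → M} (hsymm : ∀ u v, a u v = a v u) {S : Finset V} {w : V}
    (hw : w ∉ S) :
    pairSum a (insert w S) = pairSum a S + (∑ v ∈ S, a w v + ∑ v ∈ S, a w v) := by
  have hinner : ∀ u ∈ S, ∑ v ∈ (insert w S).erase u, a u v
      = a u w + ∑ v ∈ S.erase u, a u v := fun u hu => by
    rw [erase_insert_of_ne (ne_of_mem_of_not_mem hu hw).symm,
      sum_insert fun h => hw (mem_of_mem_erase h)]
  rw [pairSum, sum_insert hw, erase_insert hw, sum_congr rfl hinner, sum_add_distrib, pairSum]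
  simp only [hsymm _ w]
  abel

lemma pairSum_exchange_le [LinearOrder M] [IsOrderedAddMonoid M] {a : V → V → M}
    (hsymm : ∀ u v, a u v = a v u) {X Y : Finset V} {i j : V} (hiX : i ∉ X) (hjX : j ∉ X)
    (hiY : i ∉ Y) (hjY : j ∉ Y)
    (hle : ∑ u ∈ X, a j u + ∑ v ∈ Y, a i v ≤ ∑ u ∈ X, a i u + ∑ v ∈ Y, a j v) :
    pairSum a (insert j X) + pairSum a (insert i Y) ≤
      pairSum a (insert i X) + pairSum a (insert j Y) := by
  simp only [pairSum_insert hsymm, hiX, hjX, hiY, hjY, not_false_eq_true]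
  calc _ = pairSum a X + pairSum a Y + ((∑ u ∈ X, a j u + ∑ v ∈ Y, a i v) +
          (∑ u ∈ X, a j u + ∑ v ∈ Y, a i v)) := by abel
    _ ≤ pairSum a X + pairSum a Y + ((∑ u ∈ X, a i u + ∑ v ∈ Y, a j v) +
          (∑ u ∈ X, a i u + ∑ v ∈ Y, a j v)) := by gcongr
    _ = _ := by abel

end PairSum

theorem IsUltrasimilarity.mnatConvex_pairSum_layer {V : Type*} [Fintype V] [DecidableEq V]
    {a : V → V → WithTop ℝ} (ha : IsUltrasimilarity a) (N : ℕ) :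
    MnatConvex fun S : Finset V => if S.card = N then pairSum a S else ⊤ := by
  intro X Y i hi
  by_cases hX : X.card = N
  swap; · left; simp [hX]
  by_cases hY : Y.card = N
  swap; · left; simp [hY]
  obtain ⟨j, hj, hle⟩ := ha.exists_sum_exchange_le (hX.trans hY.symm) hi
  obtain ⟨hiX, hiY⟩ := mem_sdiff.1 hi
  obtain ⟨hjY, hjX⟩ := mem_sdiff.1 hj
  have hij : i ≠ j := fun h => hiY (h ▸ hjY)
  have hcard : ∀ {S : Finset V} {u v : V}, u ∈ S → v ∉ S → (insert v (S.erase u)).card = S.card :=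
    fun hu hv => by
      rw [card_insert_of_notMem fun h => hv (mem_of_mem_erase h), card_erase_add_one hu]
  right
  refine ⟨j, hj, ?_⟩
  beta_reduce
  rw [erase_insert_of_ne hij, if_pos (by rw [hcard hiX hjX, hX]),
    if_pos (by rw [hcard hjY hiY, hY]), if_pos hX, if_pos hY]
  conv_rhs => rw [← insert_erase hiX, ← insert_erase hjY]
  exact pairSum_exchange_le ha.symm (notMem_erase i X) (fun h => hjX (mem_of_mem_erase h))
    (fun h => hiY (mem_of_mem_erase h)) (notMem_erase j Y) hle

lemma injOn_insert_erase {ι κ : Type*} [DecidableEq ι] {p : ι → κ} {S : Finset ι}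
    (hS : Set.InjOn p S) {i j : ι} (hi : i ∈ S) (hji : p j = p i) :
    Set.InjOn p ↑(insert j (S.erase i)) := by
  have hne : ∀ u ∈ S.erase i, p u ≠ p i := fun u hu h =>
    ne_of_mem_erase hu (hS (mem_of_mem_erase hu) hi h)
  rw [coe_insert, Set.injOn_insert fun h => hne j h hji]
  exact ⟨hS.mono (coe_subset.2 (erase_subset i S)), fun ⟨u, hu, hpu⟩ => hne u hu (hpu.trans hji)⟩

theorem mnatConvex_sum_of_injOn {ι κ : Type*} [DecidableEq ι] [DecidableEq κ] (p : ι → κ)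
    (w : ι → WithTop ℝ) :
    MnatConvex fun S : Finset ι => if Set.InjOn p S then ∑ u ∈ S, w u else ⊤ := by
  intro X Y i hi
  obtain ⟨hiX, hiY⟩ := mem_sdiff.1 hi
  by_cases hX : Set.InjOn p X
  swap; · left; simp [hX]
  by_cases hY : Set.InjOn p Y
  swap; · left; simp [hY]
  beta_reduce
  by_cases hj : ∃ j ∈ Y, p j = p i
  · obtain ⟨j, hjY, hji⟩ := hj
    have hjX : j ∉ X := fun hjX => hiY (hX hjX hiX hji ▸ hjY)
    have hij : i ≠ j := fun h => hiY (h ▸ hjY)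
    right
    refine ⟨j, mem_sdiff.2 ⟨hjY, hjX⟩, le_of_eq ?_⟩
    rw [erase_insert_of_ne hij, if_pos (injOn_insert_erase hX hiX hji),
      if_pos (injOn_insert_erase hY hjY hji.symm), if_pos hX, if_pos hY,
      sum_insert fun h => hjX (mem_of_mem_erase h), sum_insert fun h => hiY (mem_of_mem_erase h),
      ← add_sum_erase X w hiX, ← add_sum_erase Y w hjY]
    abel
  · push Not at hj
    have hinjY : Set.InjOn p ↑(insert i Y) := by
      rw [coe_insert, Set.injOn_insert hiY]
      exact ⟨hY, fun ⟨v, hv, hpv⟩ => hj v hv hpv⟩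
    left
    rw [if_pos (hX.mono (coe_subset.2 (erase_subset i X))), if_pos hinjY, if_pos hX, if_pos hY,
      sum_insert hiY, ← add_sum_erase X w hiX]
    exact le_of_eq (by abel)

noncomputable def halve : WithTop ℝ → WithTop ℝ := WithTop.map (· / 2)

lemma monotone_halve : Monotone halve :=
  Monotone.withTop_map fun _ _ h => div_le_div_of_nonneg_right h zero_le_two

lemma halve_add_halve (x : WithTop ℝ) : halve x + halve x = x := by
  induction x with
  | top => rfl
  | coe t => simp [halve, ← WithTop.coe_add]

lemma sum_sum_erase_eq_sum_lt {ι M : Type*} [Fintype ι] [LinearOrder ι] [AddCommMonoid M]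
    (h : ι → ι → M) (hsymm : ∀ i j, h i j = h j i) :
    ∑ i, ∑ j ∈ univ.erase i, h i j =
      ∑ p ∈ (univ ×ˢ univ).filter (fun p : ι × ι => p.1 < p.2), (h p.1 p.2 + h p.1 p.2) := by
  have hlt : ∑ p ∈ (univ ×ˢ univ).filter (fun p : ι × ι => p.1 < p.2), h p.1 p.2 =
      ∑ i, ∑ j, if i < j then h i j else 0 := by
    rw [sum_filter, sum_product]
  have hgt : ∑ i, ∑ j, (if j < i then h i j else 0) = ∑ i, ∑ j, if i < j then h i j else 0 := by
    rw [sum_comm]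
    exact sum_congr rfl fun i _ => sum_congr rfl fun j _ => by rw [hsymm]
  calc ∑ i, ∑ j ∈ univ.erase i, h i j
      = ∑ i, ∑ j, ((if i < j then h i j else 0) + if j < i then h i j else 0) := by
        refine sum_congr rfl fun i _ => ?_
        rw [← filter_ne', sum_filter]
        refine sum_congr rfl fun j _ => ?_
        rcases lt_trichotomy i j with hij | rfl | hij
        · simp [hij, hij.ne', hij.not_gt]
        · simp
        · simp [hij, hij.ne, hij.not_gt]
    _ = _ := by simp only [sum_add_distrib, hgt, hlt]

section Completion

variable {r : ℕ} {d : Fin r → ℕ}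

def crossCost (cb : ∀ i j : Fin r, Fin (d i) → Fin (d j) → WithTop ℝ)
    (u v : (i : Fin r) × Fin (d i)) : WithTop ℝ :=
  cb u.1 v.1 u.2 v.2

def joinLevel (cb : ∀ i j : Fin r, Fin (d i) → Fin (d j) → WithTop ℝ)
    (u v : (i : Fin r) × Fin (d i)) : WithTop ℝ :=
  (univ.filter fun z : (i : Fin r) × Fin (d i) => z.1 ≠ u.1).fold max 0
    fun z => min (crossCost cb u z) (crossCost cb v z)

def completedCost (cb : ∀ i j : Fin r, Fin (d i) → Fin (d j) → WithTop ℝ)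
    (u v : (i : Fin r) × Fin (d i)) : WithTop ℝ :=
  if u = v then ⊤ else if u.1 = v.1 then joinLevel cb u v else crossCost cb u v

variable {cb : ∀ i j : Fin r, Fin (d i) → Fin (d j) → WithTop ℝ} {m : WithTop ℝ}
  {u v w z : (i : Fin r) × Fin (d i)}

lemma crossCost_comm (hcbs : ∀ i j a b, cb i j a b = cb j i b a) (u v : (i : Fin r) × Fin (d i)) :
    crossCost cb u v = crossCost cb v u :=
  hcbs _ _ _ _

lemma JWP.le_crossCost (hjwp : JWP r d cb) (hcbs : ∀ i j a b, cb i j a b = cb j i b a)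
    (huv : u.1 ≠ v.1) (hvw : v.1 ≠ w.1) (huw : u.1 ≠ w.1) (h₁ : m ≤ crossCost cb u w)
    (h₂ : m ≤ crossCost cb w v) : m ≤ crossCost cb u v :=
  (le_min (show m ≤ crossCost cb v w from crossCost_comm hcbs w v ▸ h₂) h₁).trans
    (hjwp _ _ _ huv hvw huw _ _ _)

lemma ZFree.le_crossCost (hzf : ZFree r d cb) (huw : u.1 = w.1) (hvz : v.1 = z.1)
    (huv : u.1 ≠ v.1) (hne : u ≠ w) (hne' : v ≠ z) (h₁ : m ≤ crossCost cb u z)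
    (h₂ : m ≤ crossCost cb w z) (h₃ : m ≤ crossCost cb w v) : m ≤ crossCost cb u v := by
  obtain ⟨k, a⟩ := u
  obtain ⟨k', b⟩ := w
  obtain ⟨l, c⟩ := v
  obtain ⟨l', e⟩ := z
  obtain rfl : k = k' := huw
  obtain rfl : l = l' := hvz
  have hab : a ≠ b := fun h => hne (h ▸ rfl)
  have hce : c ≠ e := fun h => hne' (h ▸ rfl)
  obtain ⟨p, q, hpq, hmin, heq⟩ := hzf k l huv a b hab c e hce
  by_contra! hlt
  have hunique : ∀ t ≠ 0, ![cb k l a c, cb k l a e, cb k l b c, cb k l b e] 0 <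
      ![cb k l a c, cb k l a e, cb k l b c, cb k l b e] t := by
    intro t ht
    fin_cases t
    · exact absurd rfl ht
    · exact hlt.trans_le h₁
    · exact hlt.trans_le h₃
    · exact hlt.trans_le h₂
  obtain rfl : p = 0 := by
    by_contra hp
    exact (hmin 0).not_gt (hunique p hp)
  exact (hunique q hpq.symm).ne heq

lemma crossCost_le_of_fst_eq (hcbs : ∀ i j a b, cb i j a b = cb j i b a) (hjwp : JWP r d cb)
    (hzf : ZFree r d cb) (huw : u.1 = w.1) (hvu : v.1 ≠ u.1) (hzu : z.1 ≠ u.1)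
    (h₁ : m ≤ crossCost cb u z) (h₂ : m ≤ crossCost cb w z) (h₃ : m ≤ crossCost cb w v) :
    m ≤ crossCost cb u v := by
  rcases eq_or_ne u w with rfl | hne
  · exact h₃
  rcases eq_or_ne v z with rfl | hne'
  · exact h₁
  by_cases hvz : v.1 = z.1
  · exact hzf.le_crossCost huw hvz hvu.symm hne hne' h₁ h₂ h₃
  have hzv : m ≤ crossCost cb z v :=
    hjwp.le_crossCost hcbs (Ne.symm hvz) (huw ▸ hvu) (huw ▸ hzu) (crossCost_comm hcbs w z ▸ h₂) h₃
  exact hjwp.le_crossCost hcbs hvu.symm hvz hzu.symm h₁ hzv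

lemma le_joinLevel_iff :
    m ≤ joinLevel cb u v ↔
      m ≤ 0 ∨ ∃ z, z.1 ≠ u.1 ∧ m ≤ crossCost cb u z ∧ m ≤ crossCost cb v z := by
  simp only [joinLevel, le_fold_max, mem_filter, mem_univ, true_and, le_min_iff]

@[simp] lemma completedCost_self (u : (i : Fin r) × Fin (d i)) : completedCost cb u u = ⊤ :=
  if_pos rfl

lemma completedCost_of_fst_ne (h : u.1 ≠ v.1) : completedCost cb u v = crossCost cb u v := by
  rw [completedCost, if_neg fun huv : u = v => h (huv ▸ rfl), if_neg h]

lemma completedCost_of_fst_eq (h : u.1 = v.1) (hne : u ≠ v) :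
    completedCost cb u v = joinLevel cb u v := by
  rw [completedCost, if_neg hne, if_pos h]

lemma completedCost_comm (hcbs : ∀ i j a b, cb i j a b = cb j i b a)
    (u v : (i : Fin r) × Fin (d i)) : completedCost cb u v = completedCost cb v u := by
  rcases eq_or_ne u v with rfl | hne
  · rfl
  by_cases h : u.1 = v.1
  · rw [completedCost_of_fst_eq h hne, completedCost_of_fst_eq h.symm hne.symm, joinLevel,
      joinLevel, h]
    simp only [min_comm]
  · rw [completedCost_of_fst_ne h, completedCost_of_fst_ne (Ne.symm h), crossCost_comm hcbs]

lemma completedCost_nonneg (hcb0 : ∀ i j a b, 0 ≤ cb i j a b) (u v : (i : Fin r) × Fin (d i)) :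
    0 ≤ completedCost cb u v := by
  rcases eq_or_ne u v with rfl | hne
  · simp
  by_cases h : u.1 = v.1
  · rw [completedCost_of_fst_eq h hne, le_joinLevel_iff]
    exact Or.inl le_rfl
  · rw [completedCost_of_fst_ne h]
    exact hcb0 _ _ _ _

lemma exists_crossCost_of_le_completedCost (hm : 0 < m) (h : u.1 = w.1) (hne : u ≠ w)
    (huw : m ≤ completedCost cb u w) :
    ∃ z, z.1 ≠ u.1 ∧ m ≤ crossCost cb u z ∧ m ≤ crossCost cb w z := by
  rwa [completedCost_of_fst_eq h hne, le_joinLevel_iff, or_iff_right hm.not_ge] at huw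

lemma le_crossCost_of_le_completedCost (hcbs : ∀ i j a b, cb i j a b = cb j i b a)
    (hjwp : JWP r d cb) (hzf : ZFree r d cb) (hm : 0 < m) (h : u.1 = w.1) (hne : u ≠ w)
    (hwv : w.1 ≠ v.1) (huw : m ≤ completedCost cb u w) (h₂ : m ≤ crossCost cb w v) :
    m ≤ crossCost cb u v := by
  obtain ⟨z, hz, h₁, h₁'⟩ := exists_crossCost_of_le_completedCost hm h hne huw
  exact crossCost_le_of_fst_eq hcbs hjwp hzf h (h ▸ Ne.symm hwv) hz h₁ h₁' h₂

lemma le_completedCost_trans (hcbs : ∀ i j a b, cb i j a b = cb j i b a) (hjwp : JWP r d cb)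
    (hzf : ZFree r d cb) (hm : 0 < m) (huw : m ≤ completedCost cb u w)
    (hwv : m ≤ completedCost cb w v) : m ≤ completedCost cb u v := by
  rcases eq_or_ne u w with rfl | hne₁
  · exact hwv
  rcases eq_or_ne w v with rfl | hne₂
  · exact huw
  rcases eq_or_ne u v with rfl | hne₃
  · simp
  have hvw := completedCost_comm hcbs w v ▸ hwv
  by_cases e₁ : u.1 = w.1 <;> by_cases e₂ : w.1 = v.1
  · obtain ⟨z, hz, h₁, h₁'⟩ := exists_crossCost_of_le_completedCost hm e₁ hne₁ huw
    rw [completedCost_of_fst_eq (e₁.trans e₂) hne₃, le_joinLevel_iff]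
    refine Or.inr ⟨z, hz, h₁, le_crossCost_of_le_completedCost hcbs hjwp hzf hm e₂.symm
      hne₂.symm (e₁ ▸ hz).symm hvw h₁'⟩
  · rw [completedCost_of_fst_ne (e₁ ▸ e₂)]
    exact le_crossCost_of_le_completedCost hcbs hjwp hzf hm e₁ hne₁ e₂
      huw (completedCost_of_fst_ne e₂ ▸ hwv)
  · rw [completedCost_of_fst_ne (e₂ ▸ e₁), crossCost_comm hcbs]
    exact le_crossCost_of_le_completedCost hcbs hjwp hzf hm e₂.symm hne₂.symm (Ne.symm e₁)
      hvw (completedCost_of_fst_ne (Ne.symm e₁) ▸ completedCost_comm hcbs u w ▸ huw)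
  · rw [completedCost_of_fst_ne e₁] at huw
    rw [completedCost_of_fst_ne e₂] at hwv
    by_cases e₃ : u.1 = v.1
    · rw [completedCost_of_fst_eq e₃ hne₃, le_joinLevel_iff]
      exact Or.inr ⟨w, Ne.symm e₁, huw, crossCost_comm hcbs w v ▸ hwv⟩
    · rw [completedCost_of_fst_ne e₃]
      exact hjwp.le_crossCost hcbs e₃ (Ne.symm e₂) e₁ huw hwv

theorem isUltrasimilarity_completedCost (hcb0 : ∀ i j a b, 0 ≤ cb i j a b)
    (hcbs : ∀ i j a b, cb i j a b = cb j i b a) (hjwp : JWP r d cb) (hzf : ZFree r d cb) :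
    IsUltrasimilarity (completedCost cb) where
  symm := completedCost_comm hcbs
  self := completedCost_self
  min_le u v w := by
    rcases le_or_gt (min (completedCost cb u w) (completedCost cb w v)) 0 with hm | hm
    · exact hm.trans (completedCost_nonneg hcb0 u v)
    · exact le_completedCost_trans hcbs hjwp hzf hm (min_le_left _ _) (min_le_right _ _)

end Completion

section Encoding

variable {r : ℕ} {d : Fin r → ℕ} {cb : ∀ i j : Fin r, Fin (d i) → Fin (d j) → WithTop ℝ}

lemma mk_apply_injective (x : ∀ i : Fin r, Fin (d i)) :
    Function.Injective fun i => (⟨i, x i⟩ : (i : Fin r) × Fin (d i)) :=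
  fun _ _ h => congrArg Sigma.fst h

lemma injOn_fst_enc (x : ∀ i : Fin r, Fin (d i)) :
    Set.InjOn Sigma.fst (enc r d x : Set ((i : Fin r) × Fin (d i))) := by
  rintro _ hu _ hv h
  obtain ⟨i, -, rfl⟩ := mem_image.1 hu
  obtain ⟨j, -, rfl⟩ := mem_image.1 hv
  obtain rfl : i = j := h
  rfl

lemma card_enc (x : ∀ i : Fin r, Fin (d i)) : (enc r d x).card = r := by
  rw [enc, card_image_of_injective _ (mk_apply_injective x), card_univ, Fintype.card_fin]

lemma exists_enc_eq {S : Finset ((i : Fin r) × Fin (d i))}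
    (hS : Set.InjOn Sigma.fst (S : Set ((i : Fin r) × Fin (d i)))) (hcard : S.card = r) :
    ∃ x, enc r d x = S := by
  have himage : S.image Sigma.fst = univ :=
    eq_univ_of_card _ (by rw [card_image_of_injOn hS, hcard, Fintype.card_fin])
  have hx : ∀ i, ∃ a : Fin (d i), ⟨i, a⟩ ∈ S := fun i => by
    obtain ⟨⟨i, a⟩, hu, rfl⟩ := mem_image.1 (himage ▸ mem_univ i)
    exact ⟨a, hu⟩
  choose x hx using hx
  refine ⟨x, eq_of_subset_of_card_le (image_subset_iff.2 fun i _ => hx i) ?_⟩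
  rw [hcard, card_enc]

lemma fval_eq_sum_add_pairSum (hcbs : ∀ i j a b, cb i j a b = cb j i b a)
    (cu : ∀ i : Fin r, Fin (d i) → ℝ) (x : ∀ i : Fin r, Fin (d i)) :
    fval r d cu cb x = ∑ u ∈ enc r d x, ((cu u.1 u.2 : ℝ) : WithTop ℝ) +
      pairSum (fun u v => halve (completedCost cb u v)) (enc r d x) := by
  have hinj := mk_apply_injective x
  rw [fval, pairSum, enc, sum_image hinj.injOn, sum_image hinj.injOn]
  congr 1
  rw [← sum_congr rfl fun p _ => halve_add_halve _, ← sum_sum_erase_eq_sum_lt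
    (fun i j => halve (cb i j (x i) (x j))) fun i j => by rw [hcbs]]
  refine sum_congr rfl fun i _ => ?_
  rw [← image_erase hinj, sum_image hinj.injOn]
  exact sum_congr rfl fun j hj =>
    by rw [completedCost_of_fst_ne (Ne.symm (ne_of_mem_erase hj))]; rfl

end Encoding

section Decomposition

variable {r : ℕ} {d : Fin r → ℕ}

noncomputable def unaryPart (cu : ∀ i : Fin r, Fin (d i) → ℝ)
    (S : Finset ((i : Fin r) × Fin (d i))) : WithTop ℝ :=
  if Set.InjOn Sigma.fst (S : Set ((i : Fin r) × Fin (d i))) then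
    ∑ u ∈ S, ((cu u.1 u.2 : ℝ) : WithTop ℝ) else ⊤

-- `pairSum` counts each pair `{u, v}` twice, hence the halved weights.
noncomputable def pairPart (cb : ∀ i j : Fin r, Fin (d i) → Fin (d j) → WithTop ℝ)
    (S : Finset ((i : Fin r) × Fin (d i))) : WithTop ℝ :=
  if S.card = r then pairSum (fun u v => halve (completedCost cb u v)) S else ⊤

lemma mnatConvex_unaryPart (cu : ∀ i : Fin r, Fin (d i) → ℝ) : MnatConvex (unaryPart cu) :=
  mnatConvex_sum_of_injOn Sigma.fst fun u : (i : Fin r) × Fin (d i) => (cu u.1 u.2 : WithTop ℝ)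

lemma mnatConvex_pairPart {cb : ∀ i j : Fin r, Fin (d i) → Fin (d j) → WithTop ℝ}
    (hcb0 : ∀ i j a b, 0 ≤ cb i j a b) (hcbs : ∀ i j a b, cb i j a b = cb j i b a)
    (hjwp : JWP r d cb) (hzf : ZFree r d cb) : MnatConvex (pairPart cb) :=
  ((isUltrasimilarity_completedCost hcb0 hcbs hjwp hzf).comp monotone_halve
    rfl).mnatConvex_pairSum_layer r

lemma fhat_eq_unaryPart_add_pairPart {cu : ∀ i : Fin r, Fin (d i) → ℝ}
    {cb : ∀ i j : Fin r, Fin (d i) → Fin (d j) → WithTop ℝ}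
    (hcbs : ∀ i j a b, cb i j a b = cb j i b a) (S : Finset ((i : Fin r) × Fin (d i))) :
    fhat r d cu cb S = unaryPart cu S + pairPart cb S := by
  rw [fhat]
  split_ifs with h
  · rw [fval_eq_sum_add_pairSum hcbs, h.choose_spec, unaryPart, pairPart,
      if_pos (h.choose_spec ▸ injOn_fst_enc _), if_pos (h.choose_spec ▸ card_enc _)]
  · by_cases hS : Set.InjOn Sigma.fst (S : Set ((i : Fin r) × Fin (d i)))
    · rw [pairPart, if_neg fun hcard => h (exists_enc_eq hS hcard), add_top]
    · rw [unaryPart, if_neg hS, top_add]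

end Decomposition

theorem stmt10_general (r : ℕ) (d : Fin r → ℕ)
    (cu : ∀ i : Fin r, Fin (d i) → ℝ)
    (cb : ∀ i j : Fin r, Fin (d i) → Fin (d j) → WithTop ℝ)
    (hcb0 : ∀ i j a b, 0 ≤ cb i j a b)
    (hcbs : ∀ i j a b, cb i j a b = cb j i b a)
    (hjwp : JWP r d cb) (hzf : ZFree r d cb) :
    ∃ g₁ g₂ : Finset ((i : Fin r) × Fin (d i)) → WithTop ℝ,
      MnatConvex g₁ ∧ MnatConvex g₂ ∧
      ∀ S : Finset ((i : Fin r) × Fin (d i)), fhat r d cu cb S = g₁ S + g₂ S :=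
  ⟨unaryPart cu, pairPart cb, mnatConvex_unaryPart cu,
    mnatConvex_pairPart hcb0 hcbs hjwp hzf, fhat_eq_unaryPart_add_pairPart hcbs⟩

/-- If `f(x) = Σ_i c_i(x_i) + Σ_{i<j} c_{ij}(x_i,x_j)` (nonnegative costs) satisfies the
joint winner property and is Z-free, then `f̂` is M♮₂-convex: it is the sum of two
M♮-convex functions on `{0,1}^U`. -/
theorem stmt10 (r : ℕ) (d : Fin r → ℕ) (hd : ∀ i, 2 ≤ d i)
    (cu : ∀ i : Fin r, Fin (d i) → ℝ) (hcu : ∀ i a, 0 ≤ cu i a)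
    (cb : ∀ i j : Fin r, Fin (d i) → Fin (d j) → WithTop ℝ)
    (hcb0 : ∀ i j a b, 0 ≤ cb i j a b)
    (hcbs : ∀ i j a b, cb i j a b = cb j i b a)
    (hjwp : JWP r d cb) (hzf : ZFree r d cb) :
    ∃ g₁ g₂ : Finset ((i : Fin r) × Fin (d i)) → WithTop ℝ,
      MnatConvex g₁ ∧ MnatConvex g₂ ∧
      ∀ S : Finset ((i : Fin r) × Fin (d i)), fhat r d cu cb S = g₁ S + g₂ S :=
  stmt10_general r d cu cb hcb0 hcbs hjwp hzf
end

section
/- Let H = (h_{ij})_{i,j∈[n]} be a symmetric partial matrix whose defined off-diagonal entries lie in ℝ ∪ {+∞}, and suppose the assignment graph G_H contains a chordless cycle C = {{i_1,i_2}, {i_2,i_3}, …, {i_m,i_1}} on which the minimum edge weight is attained by exactly one edge. Then H is not M♮-convex completable: no assignment of values in ℝ ∪ {+∞} to the undefined entries yields a matrix satisfying the anti-ultrametric property. -/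
/-- A cycle of length `m ≥ 3`: distinct vertices, cyclically consecutive ones adjacent. -/
def IsCycle {ι : Type*} (Adj : ι → ι → Prop) (m : ℕ) (v : ZMod m → ι) : Prop :=
  3 ≤ m ∧ Function.Injective v ∧ ∀ p : ZMod m, Adj (v p) (v (p + 1))

/-- The cycle `v` is chordless: no two non-consecutive vertices of it are adjacent. -/
def IsChordless {ι : Type*} (Adj : ι → ι → Prop) (m : ℕ) (v : ZMod m → ι) : Prop :=
  ∀ p q : ZMod m, q ≠ p → q ≠ p + 1 → p ≠ q + 1 → ¬ Adj (v p) (v q)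

/-- If the assignment graph of a symmetric partial matrix `H` (`none` = undefined entry,
defined entries in `ℝ ∪ {+∞}`) contains a chordless cycle on which the minimum edge weight
is attained by exactly one edge, then no symmetric assignment of values in `ℝ ∪ {+∞}` to the
undefined entries of `H` yields a matrix satisfying the anti-ultrametric property
(`h_{ij} ≥ min{h_{ik}, h_{jk}}` for all distinct `i, j, k`); i.e. `H` is not M♮-convex
completable. -/
theorem stmt12 (n : ℕ) (H : Fin n → Fin n → Option (WithTop ℝ))
    (Hsymm : ∀ i j : Fin n, H i j = H j i)
    (m : ℕ) (v : ZMod m → Fin n)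
    (hcyc : IsCycle (fun a b => a ≠ b ∧ (H a b).isSome) m v)
    (hch : IsChordless (fun a b => a ≠ b ∧ (H a b).isSome) m v)
    (huniq : ∃ p : ZMod m,
      (∀ t : ZMod m, (H (v p) (v (p + 1))).getD ⊤ ≤ (H (v t) (v (t + 1))).getD ⊤) ∧
      ∀ q : ZMod m,
        (∀ t : ZMod m, (H (v q) (v (q + 1))).getD ⊤ ≤ (H (v t) (v (t + 1))).getD ⊤) → q = p) :
    ¬ ∃ H' : Fin n → Fin n → WithTop ℝ,
        (∀ i j : Fin n, H' i j = H' j i) ∧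
        (∀ (i j : Fin n) (a : WithTop ℝ), i ≠ j → H i j = some a → H' i j = a) ∧
        (∀ i j k : Fin n, i ≠ j → j ≠ k → i ≠ k → min (H' i k) (H' j k) ≤ H' i j) := by
  rintro ⟨H', hs, hc, hau⟩
  obtain ⟨p, hpmin, hpuniq⟩ := huniq
  obtain ⟨hm, hinj, hadj⟩ := hcyc
  set w : ZMod m → WithTop ℝ := fun t => (H (v t) (v (t + 1))).getD ⊤ with hw
  -- the completion agrees with the defined entries along the cycle
  have hedge : ∀ t : ZMod m, H' (v t) (v (t + 1)) = w t := by
    intro t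
    obtain ⟨hne, hsome⟩ := hadj t
    obtain ⟨a, ha⟩ := Option.isSome_iff_exists.mp hsome
    rw [hc _ _ a hne ha, hw]
    simp [ha]
  -- the minimum is strict at all other edges
  have hstrict : ∀ t : ZMod m, t ≠ p → w p < w t := by
    intro t ht
    by_contra hle
    push_neg at hle
    exact ht (hpuniq t fun t' => le_trans hle (hpmin t'))
  -- distinct small naturals give distinct cycle vertices
  have hcast : ∀ a b : ℕ, a < m → b < m → a ≠ b → (a : ZMod m) ≠ (b : ZMod m) := by
    intro a b ha hb hab h
    apply hab
    have := congrArg ZMod.val h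
    rwa [ZMod.val_cast_of_lt ha, ZMod.val_cast_of_lt hb] at this
  have hvne : ∀ a b : ℕ, a < m → b < m → a ≠ b →
      v (p + (a : ZMod m)) ≠ v (p + (b : ZMod m)) := by
    intro a b ha hb hab h
    exact hcast a b ha hb hab (add_left_cancel (hinj h))
  have hne0 : ∀ a : ℕ, 0 < a → a < m → p + (a : ZMod m) ≠ p := by
    intro a ha0 ha h
    have : (a : ZMod m) = ((0 : ℕ) : ZMod m) := by
      have := add_left_cancel (a := p) (b := (a : ZMod m)) (c := 0) (by simpa using h)
      simpa using this
    exact hcast a 0 ha (by omega) (by omega) this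
  -- key: the "chord" from v (p+1) to v (p+k) exceeds the minimum
  have key : ∀ k : ℕ, 2 ≤ k → k < m → w p < H' (v (p + 1)) (v (p + (k : ZMod m))) := by
    intro k
    induction k with
    | zero => omega
    | succ k ih =>
      intro h2 hlt
      rcases Nat.lt_or_ge k 2 with hk | hk
      · -- base case k + 1 = 2
        have hk1 : k = 1 := by omega
        subst hk1
        have hcast2 : ((2 : ℕ) : ZMod m) = 1 + 1 := by push_cast; ring
        rw [hcast2, show p + (1 + 1) = (p + 1) + 1 by ring, hedge (p + 1)]
        exact hstrict (p + 1) (by simpa using hne0 1 (by omega) (by omega))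
      · have ihk := ih hk (by omega)
        have hcastk : ((k + 1 : ℕ) : ZMod m) = (k : ZMod m) + 1 := by push_cast; ring
        have hmin := hau (v (p + 1)) (v (p + ((k + 1 : ℕ) : ZMod m))) (v (p + (k : ZMod m)))
          (by simpa using hvne 1 (k + 1) (by omega) hlt (by omega))
          (hvne (k + 1) k hlt (by omega) (by omega))
          (by simpa using hvne 1 k (by omega) (by omega) (by omega))
        have hedgek : H' (v (p + ((k + 1 : ℕ) : ZMod m))) (v (p + (k : ZMod m))) = w (p + (k : ZMod m)) := by
          rw [hs, hcastk, show p + ((k : ZMod m) + 1) = (p + (k : ZMod m)) + 1 by ring]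
          exact hedge (p + (k : ZMod m))
        rw [hedgek] at hmin
        exact lt_of_lt_of_le (lt_min ihk (hstrict _ (hne0 k (by omega) (by omega)))) hmin
  -- final contradiction using the edge back to v p
  have hlast := key (m - 1) (by omega) (by omega)
  have hz : p + ((m - 1 : ℕ) : ZMod m) + 1 = p := by
    rw [add_assoc]
    have : (((m - 1) + 1 : ℕ) : ZMod m) = 0 := by
      rw [Nat.sub_add_cancel (by omega)]
      exact ZMod.natCast_self m
    push_cast at this
    rw [this, add_zero]
  have hedgelast : H' (v p) (v (p + ((m - 1 : ℕ) : ZMod m))) = w (p + ((m - 1 : ℕ) : ZMod m)) := by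
    rw [hs]
    have := hedge (p + ((m - 1 : ℕ) : ZMod m))
    rwa [hz] at this
  have hne1 : v (p + 1) ≠ v p := by
    have := hvne 1 0 (by omega) (by omega) (by omega)
    simpa using this
  have hne2 : v p ≠ v (p + ((m - 1 : ℕ) : ZMod m)) := by
    have := hvne 0 (m - 1) (by omega) (by omega) (by omega)
    simpa using this
  have hne3 : v (p + 1) ≠ v (p + ((m - 1 : ℕ) : ZMod m)) := by
    have := hvne 1 (m - 1) (by omega) (by omega) (by omega)
    simpa using this
  have hmin := hau (v (p + 1)) (v p) (v (p + ((m - 1 : ℕ) : ZMod m))) hne1 hne2 hne3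
  rw [hedgelast] at hmin
  have hfinal : w p < H' (v (p + 1)) (v p) :=
    lt_of_lt_of_le (lt_min hlast (hstrict _ (hne0 (m - 1) (by omega) (by omega)))) hmin
  rw [hs, hedge p] at hfinal
  exact lt_irrefl _ hfinal
end
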